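/- arXiv:1104.2397 — 8 statements merged into one kernel-verified Lean document; each statement's English description precedes it below -/
import Mathlib

section
/- If V : [t0,t1] → ℝ³ is C³ and satisfies V'''(t) = V''(t) × V(t) for all t ∈ [t0,t1], then the function t ↦ ‖V''(t)‖² is constant on [t0,t1]. (Lie quadratics have constant covariant acceleration.) -/
noncomputable section
open scoped RealInnerProductSpace

/-- `ℝ³` with the Euclidean inner product. -/
abbrev E3 : Type := EuclideanSpace ℝ (Fin 3)

/-- The cross product on `ℝ³`; with `⁅u,v⁆ := cross u v`, `ℝ³` is the Lie algebra `so(3)`. -/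
def cross (u v : E3) : E3 :=
  (WithLp.equiv 2 (Fin 3 → ℝ)).symm
    ![u 1 * v 2 - u 2 * v 1, u 2 * v 0 - u 0 * v 2, u 0 * v 1 - u 1 * v 0]

/-! Since `V''' = V'' × V` is orthogonal to `V''`, the derivative `2⟪V'', V'''⟫` of `‖V''‖²`
vanishes, so `‖V''‖²` is constant by the mean value theorem. -/

lemma inner_cross_self (u v : E3) : ⟪cross u v, u⟫ = 0 := by
  simp only [cross, PiLp.inner_apply, Fin.sum_univ_three, WithLp.equiv_symm_apply,
    Matrix.cons_val_zero, Matrix.cons_val_one, Matrix.cons_val, RCLike.inner_apply,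
    Real.ringHom_apply]
  ring

lemma inner_self_cross (u v : E3) : ⟪u, cross u v⟫ = 0 := by
  rw [real_inner_comm, inner_cross_self]

theorem norm_sq_eq_of_inner_deriv_eq_zero {F : Type*} [NormedAddCommGroup F]
    [InnerProductSpace ℝ F] {f f' : ℝ → F} {a b : ℝ}
    (hf : ∀ x ∈ Set.Icc a b, HasDerivWithinAt f (f' x) (Set.Icc a b) x)
    (horth : ∀ x ∈ Set.Icc a b, ⟪f x, f' x⟫ = 0) :
    ∀ x ∈ Set.Icc a b, ‖f x‖ ^ 2 = ‖f a‖ ^ 2 := by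
  refine constant_of_has_deriv_right_zero (fun x hx => (hf x hx).norm_sq.continuousWithinAt)
    fun x hx => ?_
  have hx' := Set.Ico_subset_Icc_self hx
  simpa only [horth x hx', mul_zero] using
    (hf x hx').norm_sq.mono_of_mem_nhdsWithin (Icc_mem_nhdsGE_of_mem hx)

theorem hasDerivWithinAt_iteratedDerivWithin {F : Type*} [NormedAddCommGroup F]
    [NormedSpace ℝ F] {f : ℝ → F} {s : Set ℝ} {n : ℕ} {m : WithTop ℕ∞} (hf : ContDiffOn ℝ m f s)
    (hnm : n < m) (hs : UniqueDiffOn ℝ s) {x : ℝ} (hx : x ∈ s) :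
    HasDerivWithinAt (iteratedDerivWithin n f s) (iteratedDerivWithin (n + 1) f s x) s x := by
  rw [iteratedDerivWithin_succ]
  exact (hf.differentiableOn_iteratedDerivWithin hnm hs x hx).hasDerivWithinAt

/-- If a `C³` curve `V : [t0,t1] → ℝ³` satisfies `V''' = V'' × V`, then `t ↦ ‖V''(t)‖²`
is constant on `[t0,t1]`: Lie quadratics have constant covariant acceleration. -/
theorem stmt_1 (t0 t1 : ℝ) (ht : t0 < t1) (V : ℝ → E3)
    (hV : ContDiffOn ℝ 3 V (Set.Icc t0 t1))
    (hLQ : ∀ t ∈ Set.Icc t0 t1,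
        iteratedDerivWithin 3 V (Set.Icc t0 t1) t =
          cross (iteratedDerivWithin 2 V (Set.Icc t0 t1) t) (V t)) :
    ∀ s ∈ Set.Icc t0 t1, ∀ t ∈ Set.Icc t0 t1,
      ‖iteratedDerivWithin 2 V (Set.Icc t0 t1) s‖ ^ 2 =
        ‖iteratedDerivWithin 2 V (Set.Icc t0 t1) t‖ ^ 2 := by
  intro s hs t ht'
  have hderiv : ∀ x ∈ Set.Icc t0 t1, HasDerivWithinAt (iteratedDerivWithin 2 V (Set.Icc t0 t1))
      (iteratedDerivWithin 3 V (Set.Icc t0 t1) x) (Set.Icc t0 t1) x := fun x hx =>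
    hasDerivWithinAt_iteratedDerivWithin hV (by norm_num) (uniqueDiffOn_Icc ht) hx
  have horth : ∀ x ∈ Set.Icc t0 t1, ⟪iteratedDerivWithin 2 V (Set.Icc t0 t1) x,
      iteratedDerivWithin 3 V (Set.Icc t0 t1) x⟫ = 0 := fun x hx => by
    rw [hLQ x hx, inner_self_cross]
  rw [norm_sq_eq_of_inner_deriv_eq_zero hderiv horth s hs,
    norm_sq_eq_of_inner_deriv_eq_zero hderiv horth t ht']
end
end

section
/- Let A, B ∈ Matrix (Fin n) (Fin n) ℝ and define V : ℝ → Matrix (Fin n) (Fin n) ℝ by V(t) := exp(−tB) · A · exp(tB) + B, where exp is the matrix exponential; V is the left Lie reduction of the pointwise product t ↦ exp(tA)·exp(tB) of the two one-parameter subgroups generated by A and B. Then there exists a constant matrix C with V''(t) = ⁅V'(t), V(t)⁆ + C for all t ∈ ℝ if and only if ⁅⁅⁅B, A⁆, A⁆, B⁆ = 0, where ⁅X, Y⁆ := XY − YX. -/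
/-!
Write `Ad t X = exp (-tB) X exp (tB)`, so that `V t = Ad t A + B`. Differentiating gives
`d/dt Ad t X = Ad t ⁅X, B⁆`, hence `V' = Ad ⁅A, B⁆` and `V'' = Ad ⁅⁅A, B⁆, B⁆`. Since `Ad t` is
conjugation by a unit commuting with `B`, it preserves brackets and fixes `B`, so
`⁅V', V⁆ = Ad ⁅⁅A, B⁆, A⁆ + V''`. Thus `V'' - ⁅V', V⁆ = -Ad ⁅⁅A, B⁆, A⁆` is constant exactly when
the derivative `Ad ⁅⁅⁅A, B⁆, A⁆, B⁆` vanishes, i.e. when `⁅⁅⁅A, B⁆, A⁆, B⁆ = 0`.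
-/

noncomputable section

open NormedSpace

section Conjugation

variable {R : Type*} [Ring R]

theorem lie_mul_mul_of_mul_eq_one {P Q : R} (hQP : Q * P = 1) (X Y : R) :
    ⁅P * X * Q, P * Y * Q⁆ = P * ⁅X, Y⁆ * Q := by
  simp only [Ring.lie_def]
  calc P * X * Q * (P * Y * Q) - P * Y * Q * (P * X * Q)
      = P * X * (Q * P) * Y * Q - P * Y * (Q * P) * X * Q := by noncomm_ring
    _ = P * (X * Y - Y * X) * Q := by rw [hQP]; noncomm_ring

theorem lie_mul_mul_of_commute {P Q B : R} (hP : Commute P B) (hQ : Commute Q B) (X : R) :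
    ⁅P * X * Q, B⁆ = P * ⁅X, B⁆ * Q := by
  simp only [Ring.lie_def]
  calc P * X * Q * B - B * (P * X * Q) = P * X * (Q * B) - B * P * X * Q := by noncomm_ring
    _ = P * (X * B - B * X) * Q := by rw [hQ.eq, ← hP.eq]; noncomm_ring

theorem lie_mul_mul_add_of_commute {P Q B : R} (hQP : Q * P = 1) (hP : Commute P B)
    (hQ : Commute Q B) (X Y : R) :
    ⁅P * X * Q, P * Y * Q + B⁆ = P * ⁅X, Y⁆ * Q + P * ⁅X, B⁆ * Q := by
  rw [← lie_mul_mul_of_mul_eq_one hQP, ← lie_mul_mul_of_commute hP hQ]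
  simp only [Ring.lie_def, mul_add, add_mul]
  abel

end Conjugation

section Exp

variable {𝕂 𝔸 : Type*} [RCLike 𝕂] [NormedRing 𝔸] [NormedAlgebra 𝕂 𝔸] [CompleteSpace 𝔸]

theorem hasDerivAt_exp_neg_smul_mul_mul_exp_smul (B X : 𝔸) (t : 𝕂) :
    HasDerivAt (fun s : 𝕂 => exp (-(s • B)) * X * exp (s • B))
      (exp (-(t • B)) * ⁅X, B⁆ * exp (t • B)) t := by
  have hneg : HasDerivAt (fun s : 𝕂 => exp (-(s • B))) (-(B * exp (-(t • B)))) t := by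
    simpa only [Function.comp_def, neg_smul, neg_one_smul, mul_neg, one_smul] using
      (hasDerivAt_exp_smul_const' B (-t)).scomp t (hasDerivAt_neg t)
  refine ((hneg.mul_const X).mul (hasDerivAt_exp_smul_const B t)).congr_deriv ?_
  have hB : Commute B (t • B) := (Commute.refl B).smul_right t
  rw [Ring.lie_def, hB.neg_right.exp_right.eq, ← hB.exp_right.eq]
  noncomm_ring

theorem exists_forall_exp_neg_smul_mul_mul_exp_smul_eq_iff [NormedAlgebra ℚ 𝔸] (B X : 𝔸) :
    (∃ C, ∀ t : 𝕂, exp (-(t • B)) * X * exp (t • B) = C) ↔ ⁅X, B⁆ = 0 := by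
  constructor
  · rintro ⟨C, hC⟩
    have hderiv := hasDerivAt_exp_neg_smul_mul_mul_exp_smul B X (0 : 𝕂)
    rw [funext hC] at hderiv
    simpa using hderiv.unique (hasDerivAt_const (0 : 𝕂) C)
  · intro h
    have hXB : Commute X B := by rwa [Ring.lie_def, sub_eq_zero] at h
    exact ⟨X, fun t => (hXB.smul_right t).exp_neg_mul_mul_exp_eq_self⟩

end Exp

namespace Matrix

variable {m : Type*} [Fintype m] [DecidableEq m]

/- Matrices carry no global normed ring structure. We borrow the `L∞` operator norm, which induces
the same topology as the entrywise norm used in the theorem; the statements of this section depend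
only on that topology. Completeness is passed by hand because instance search does not see through
the operator-norm uniform structure. -/
section LinftyOp

attribute [local instance] Matrix.linftyOpNormedRing Matrix.linftyOpNormedAlgebra

theorem tendsto_slope_exp_neg_smul_mul_mul_exp_smul (B X : Matrix m m ℝ) (t : ℝ) :
    Filter.Tendsto (slope (fun s : ℝ => exp (-(s • B)) * X * exp (s • B)) t)
      (nhdsWithin t {t}ᶜ) (nhds (exp (-(t • B)) * ⁅X, B⁆ * exp (t • B))) :=
  hasDerivAt_iff_tendsto_slope.mp
    (@_root_.hasDerivAt_exp_neg_smul_mul_mul_exp_smul _ _ _ _ _ (instCompleteSpace ..) B X t)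

theorem exists_forall_exp_neg_smul_mul_mul_exp_smul_eq_iff (B X : Matrix m m ℝ) :
    (∃ C, ∀ t : ℝ, exp (-(t • B)) * X * exp (t • B) = C) ↔ ⁅X, B⁆ = 0 :=
  @_root_.exists_forall_exp_neg_smul_mul_mul_exp_smul_eq_iff _ _ _ _ _ (instCompleteSpace ..) _ B X

end LinftyOp

theorem exp_smul_mul_exp_neg_smul (B : Matrix m m ℝ) (t : ℝ) :
    exp (t • B) * exp (-(t • B)) = 1 := by
  rw [← exp_add_of_commute _ _ (Commute.refl (t • B)).neg_right, add_neg_cancel, exp_zero]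

end Matrix

attribute [local instance] Matrix.normedAddCommGroup Matrix.normedSpace

theorem Matrix.hasDerivAt_exp_neg_smul_mul_mul_exp_smul {m : Type*} [Fintype m] [DecidableEq m]
    (B X : Matrix m m ℝ) (t : ℝ) :
    HasDerivAt (fun s : ℝ => exp (-(s • B)) * X * exp (s • B))
      (exp (-(t • B)) * ⁅X, B⁆ * exp (t • B)) t :=
  hasDerivAt_iff_tendsto_slope.mpr (tendsto_slope_exp_neg_smul_mul_mul_exp_smul B X t)

/-- The left Lie reduction `V(t) = exp(−tB)·A·exp(tB) + B` of the pointwise product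
`t ↦ exp(tA)·exp(tB)` of two one-parameter matrix subgroups is a Lie quadratic, i.e.
satisfies `V'' = ⁅V', V⁆ + C` for some constant matrix `C`, if and only if
`⁅⁅⁅B, A⁆, A⁆, B⁆ = 0`, where `⁅X, Y⁆ = X*Y − Y*X`. -/
theorem stmt_3 {n : ℕ} (A B : Matrix (Fin n) (Fin n) ℝ) :
    (∃ C : Matrix (Fin n) (Fin n) ℝ, ∀ t : ℝ,
        iteratedDeriv 2
            (fun s : ℝ =>
              NormedSpace.exp (-(s • B)) * A * NormedSpace.exp (s • B) + B) t =
          ⁅deriv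
              (fun s : ℝ =>
                NormedSpace.exp (-(s • B)) * A * NormedSpace.exp (s • B) + B) t,
            NormedSpace.exp (-(t • B)) * A * NormedSpace.exp (t • B) + B⁆ + C) ↔
      ⁅⁅⁅B, A⁆, A⁆, B⁆ = 0 := by
  have hV' : deriv (fun s => exp (-(s • B)) * A * exp (s • B) + B) =
      fun t => exp (-(t • B)) * ⁅A, B⁆ * exp (t • B) :=
    funext fun t => ((Matrix.hasDerivAt_exp_neg_smul_mul_mul_exp_smul B A t).add_const B).deriv
  have hV'' (t : ℝ) : iteratedDeriv 2 (fun s => exp (-(s • B)) * A * exp (s • B) + B) t =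
      exp (-(t • B)) * ⁅⁅A, B⁆, B⁆ * exp (t • B) := by
    rw [iteratedDeriv_succ', iteratedDeriv_one]
    -- `iteratedDeriv_succ'` produces `deriv` with the normed instances; `hV'` matches up to unfolding
    show deriv (deriv fun s => exp (-(s • B)) * A * exp (s • B) + B) t = _
    rw [hV']
    exact (Matrix.hasDerivAt_exp_neg_smul_mul_mul_exp_smul B _ t).deriv
  have hbracket (t : ℝ) :
      ⁅exp (-(t • B)) * ⁅A, B⁆ * exp (t • B), exp (-(t • B)) * A * exp (t • B) + B⁆ =
        exp (-(t • B)) * ⁅⁅A, B⁆, A⁆ * exp (t • B) + exp (-(t • B)) * ⁅⁅A, B⁆, B⁆ * exp (t • B) := by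
    have hB : Commute (t • B) B := (Commute.refl B).smul_left t
    exact lie_mul_mul_add_of_commute (Matrix.exp_smul_mul_exp_neg_smul B t)
      hB.neg_left.exp_left hB.exp_left _ _
  have hskew : ⁅⁅⁅B, A⁆, A⁆, B⁆ = -⁅⁅⁅A, B⁆, A⁆, B⁆ := by
    simp only [Ring.lie_def]
    noncomm_ring
  rw [hskew, neg_eq_zero, ← Matrix.exists_forall_exp_neg_smul_mul_mul_exp_smul_eq_iff]
  simp only [hV', hV'', hbracket]
  refine ⟨fun ⟨C, hC⟩ => ⟨-C, fun t => ?_⟩, fun ⟨C, hC⟩ => ⟨-C, fun t => ?_⟩⟩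
  · exact eq_neg_of_add_eq_zero_left (right_eq_add.mp ((hC t).trans (add_right_comm _ _ _)))
  · rw [hC t]
    abel
end
end

section
/- Let V be a variation of Lie quadratics on [t0,t1], let D ∈ ℝ³, and let q₀ be a real polynomial of degree at most 2 such that V(0,t) = q₀(t)·D for all t ∈ [t0,t1]. Then Y(t) := V^(1,0)(0,t) (the first partial derivative in h at h = 0) satisfies the first variational equation Y'''(t) + q₀(t)·(D × Y''(t)) − q₀''·(D × Y(t)) = 0 for all t ∈ [t0,t1], where q₀'' denotes the constant second derivative of q₀. -/
noncomputable section
open scoped RealInnerProductSpace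

lemma cross3_add_left (u u' v : E3) : cross (u + u') v = cross u v + cross u' v := by
  ext i; fin_cases i <;> simp [cross] <;> ring
lemma cross3_add_right (u v v' : E3) : cross u (v + v') = cross u v + cross u v' := by
  ext i; fin_cases i <;> simp [cross] <;> ring
lemma cross3_smul_left (a : ℝ) (u v : E3) : cross (a • u) v = a • cross u v := by
  ext i; fin_cases i <;> simp [cross] <;> ring
lemma cross3_smul_right (a : ℝ) (u v : E3) : cross u (a • v) = a • cross u v := by
  ext i; fin_cases i <;> simp [cross] <;> ring
lemma cross3_anticomm (u v : E3) : cross u v = - cross v u := by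
  ext i; fin_cases i <;> simp [cross] <;> ring

def crossL : E3 →L[ℝ] E3 →L[ℝ] E3 :=
  LinearMap.toContinuousLinearMap
    { toFun := fun u => LinearMap.toContinuousLinearMap
        { toFun := fun v => cross u v
          map_add' := fun v v' => cross3_add_right u v v'
          map_smul' := fun a v => cross3_smul_right a u v }
      map_add' := fun u u' => by
        apply ContinuousLinearMap.ext; intro v
        exact cross3_add_left u u' v
      map_smul' := fun a u => by
        apply ContinuousLinearMap.ext; intro v
        exact cross3_smul_left a u v }

@[simp] lemma crossL_apply (u v : E3) : crossL u v = cross u v := rfl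

open Function

lemma hasDerivAt_pair_right (h t : ℝ) :
    HasDerivAt (fun s => ((h, s) : ℝ × ℝ)) ((0 : ℝ), (1 : ℝ)) t :=
  (hasDerivAt_const t h).prodMk (hasDerivAt_id t)

lemma hasDerivAt_pair_left (h t : ℝ) :
    HasDerivAt (fun s => ((s, t) : ℝ × ℝ)) ((1 : ℝ), (0 : ℝ)) h :=
  (hasDerivAt_id h).prodMk (hasDerivAt_const h t)

lemma partial_t_eq (F : ℝ → ℝ → E3) (hF : ContDiff ℝ (⊤ : ℕ∞) (uncurry F)) (h t : ℝ) :
    deriv (F h) t = fderiv ℝ (uncurry F) (h, t) (0, 1) := by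
  have h1 : HasFDerivAt (uncurry F) (fderiv ℝ (uncurry F) (h, t)) (h, t) :=
    (hF.differentiable (by simp) (h, t)).hasFDerivAt
  exact (h1.comp_hasDerivAt t (hasDerivAt_pair_right h t)).deriv

lemma partial_h_eq (F : ℝ → ℝ → E3) (hF : ContDiff ℝ (⊤ : ℕ∞) (uncurry F)) (h t : ℝ) :
    deriv (fun h' => F h' t) h = fderiv ℝ (uncurry F) (h, t) (1, 0) := by
  have h1 : HasFDerivAt (uncurry F) (fderiv ℝ (uncurry F) (h, t)) (h, t) :=
    (hF.differentiable (by simp) (h, t)).hasFDerivAt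
  exact (h1.comp_hasDerivAt h (hasDerivAt_pair_left h t)).deriv

lemma contDiff_partial_t (F : ℝ → ℝ → E3) (hF : ContDiff ℝ (⊤ : ℕ∞) (uncurry F)) :
    ContDiff ℝ (⊤ : ℕ∞) (uncurry fun h t => deriv (F h) t) := by
  have : (uncurry fun h t => deriv (F h) t)
      = fun p : ℝ × ℝ => fderiv ℝ (uncurry F) p (0, 1) := by
    exact funext fun p => partial_t_eq F hF p.1 p.2
  rw [this]
  exact (hF.fderiv_right (by simp)).clm_apply contDiff_const

lemma deriv_fderiv_line (F : ℝ → ℝ → E3) (hF : ContDiff ℝ (⊤ : ℕ∞) (uncurry F))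
    (γ : ℝ → ℝ × ℝ) (x : ℝ) (d : ℝ × ℝ) (hγ : HasDerivAt γ d x) (w : ℝ × ℝ) :
    HasDerivAt (fun s => fderiv ℝ (uncurry F) (γ s) w)
      (fderiv ℝ (fderiv ℝ (uncurry F)) (γ x) d w) x := by
  have hG : HasFDerivAt (fderiv ℝ (uncurry F))
      (fderiv ℝ (fderiv ℝ (uncurry F)) (γ x)) (γ x) :=
    (((hF.fderiv_right (m := (⊤ : ℕ∞)) (by simp)).differentiable (by simp)) (γ x)).hasFDerivAt
  have h1 : HasDerivAt (fun s => fderiv ℝ (uncurry F) (γ s))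
      (fderiv ℝ (fderiv ℝ (uncurry F)) (γ x) d) x := hG.comp_hasDerivAt x hγ
  have := h1.clm_apply (hasDerivAt_const x w)
  simpa using this

lemma clairaut (F : ℝ → ℝ → E3) (hF : ContDiff ℝ (⊤ : ℕ∞) (uncurry F)) (t : ℝ) :
    deriv (fun s => deriv (fun h => F h s) 0) t = deriv (fun h => deriv (F h) t) 0 := by
  have hsymm : IsSymmSndFDerivAt ℝ (uncurry F) (0, t) :=
    hF.contDiffAt.isSymmSndFDerivAt (by simp only [minSmoothness_of_isRCLikeNormedField]; exact WithTop.coe_le_coe.mpr le_top)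
  have h1 : deriv (fun s => deriv (fun h => F h s) 0) t
      = fderiv ℝ (fderiv ℝ (uncurry F)) (0, t) (0, 1) (1, 0) := by
    have heq : (fun s => deriv (fun h => F h s) 0)
        = fun s => fderiv ℝ (uncurry F) (0, s) (1, 0) :=
      funext fun s => partial_h_eq F hF 0 s
    rw [heq]
    exact (deriv_fderiv_line F hF (fun s => (0, s)) t (0, 1)
      (hasDerivAt_pair_right 0 t) (1, 0)).deriv
  have h2 : deriv (fun h => deriv (F h) t) 0
      = fderiv ℝ (fderiv ℝ (uncurry F)) (0, t) (1, 0) (0, 1) := by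
    have heq : (fun h => deriv (F h) t)
        = fun h => fderiv ℝ (uncurry F) (h, t) (0, 1) :=
      funext fun h => partial_t_eq F hF h t
    rw [heq]
    exact (deriv_fderiv_line F hF (fun h => (h, t)) 0 (1, 0)
      (hasDerivAt_pair_left 0 t) (0, 1)).deriv
  rw [h1, h2, hsymm (0,1) (1,0)]

lemma smooth_itder (V : ℝ → ℝ → E3) (hV : ContDiff ℝ (⊤ : ℕ∞) (uncurry V)) :
    ∀ j : ℕ, ContDiff ℝ (⊤ : ℕ∞) (uncurry fun h t => iteratedDeriv j (V h) t)
  | 0 => by simpa [iteratedDeriv_zero] using hV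
  | (j + 1) => by
    have hj := smooth_itder V hV j
    have : (uncurry fun h t => iteratedDeriv (j + 1) (V h) t)
        = uncurry fun h t => deriv (fun s => iteratedDeriv j (V h) s) t := by
      funext p
      simp [uncurry, iteratedDeriv_succ]
    rw [this]
    exact contDiff_partial_t _ hj

lemma swap_itder (V : ℝ → ℝ → E3) (hV : ContDiff ℝ (⊤ : ℕ∞) (uncurry V)) :
    ∀ (j : ℕ) (t : ℝ), iteratedDeriv j (fun s => deriv (fun h => V h s) 0) t
      = deriv (fun h => iteratedDeriv j (V h) t) 0
  | 0, t => by simp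
  | (j + 1), t => by
    have hj := smooth_itder V hV j
    calc iteratedDeriv (j + 1) (fun s => deriv (fun h => V h s) 0) t
        = deriv (iteratedDeriv j (fun s => deriv (fun h => V h s) 0)) t := by
          rw [iteratedDeriv_succ]
      _ = deriv (fun s => deriv (fun h => iteratedDeriv j (V h) s) 0) t := by
          congr 1
          exact funext fun s => swap_itder V hV j s
      _ = deriv (fun h => deriv (fun s => iteratedDeriv j (V h) s) t) 0 :=
          clairaut (fun h s => iteratedDeriv j (V h) s) hj t
      _ = deriv (fun h => iteratedDeriv (j + 1) (V h) t) 0 := by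
          simp_rw [iteratedDeriv_succ]


/-- If `V` is a variation of Lie quadratics on `[t0,t1]` whose base curve is
`V(0,t) = q₀(t)·D` with `q₀` a polynomial of degree at most `2`, then
`Y(t) := ∂ₕV(0,t)` satisfies the first variational equation
`Y''' + q₀(t)·(D × Y'') − q₀''·(D × Y) = 0` on `[t0,t1]`. -/
theorem stmt_5 (t0 t1 : ℝ) (ht : t0 < t1) (V : ℝ → ℝ → E3)
    (hV : ContDiff ℝ (⊤ : ℕ∞) (Function.uncurry V))
    (hLQ : ∀ h ∈ Set.Icc (-1 : ℝ) 1, ∀ t ∈ Set.Icc t0 t1,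
        iteratedDeriv 3 (V h) t = cross (iteratedDeriv 2 (V h) t) (V h t))
    (D : E3) (q0 : Polynomial ℝ) (hq0 : q0.degree ≤ 2)
    (hbase : ∀ t ∈ Set.Icc t0 t1, V 0 t = q0.eval t • D) :
    ∀ t ∈ Set.Icc t0 t1,
      iteratedDeriv 3 (fun s => deriv (fun h => V h s) 0) t +
          q0.eval t • cross D (iteratedDeriv 2 (fun s => deriv (fun h => V h s) 0) t) -
          (q0.derivative.derivative).eval t •
            cross D (deriv (fun h => V h t) 0) = 0 := by
  intro t htmem
  set Y : ℝ → E3 := fun s => deriv (fun h => V h s) 0 with hY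
  set q2 : Polynomial ℝ := q0.derivative.derivative with hq2
  -- second derivative of the base curve
  have hg2 : ∀ s : ℝ, iteratedDeriv 2 (fun x => q0.eval x • D) s = q2.eval s • D := by
    intro s
    have hd1 : deriv (fun x => q0.eval x • D) = fun x => q0.derivative.eval x • D :=
      funext fun x => ((q0.hasDerivAt x).smul_const D).deriv
    have hd2 : deriv (fun x => q0.derivative.eval x • D)
        = fun x => q2.eval x • D :=
      funext fun x => ((q0.derivative.hasDerivAt x).smul_const D).deriv
    rw [show (2:ℕ) = 1 + 1 from rfl, iteratedDeriv_succ, iteratedDeriv_one, hd1, hd2]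
  have hcont2 : Continuous (fun s => iteratedDeriv 2 (V 0) s) :=
    ((smooth_itder V hV 2).comp (contDiff_const.prodMk contDiff_id)).continuous
  -- iteratedDeriv 2 (V 0) = q2 • D on Icc
  have hbase2 : ∀ s ∈ Set.Icc t0 t1, iteratedDeriv 2 (V 0) s = q2.eval s • D := by
    have hIoo : ∀ s ∈ Set.Ioo t0 t1, iteratedDeriv 2 (V 0) s = q2.eval s • D := by
      intro s hs
      have hev : (V 0) =ᶠ[nhds s] fun x => q0.eval x • D :=
        Filter.eventuallyEq_of_mem (Ioo_mem_nhds hs.1 hs.2)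
          (fun x hx => hbase x (Set.Ioo_subset_Icc_self hx))
      have : iteratedDeriv 2 (V 0) s = iteratedDeriv 2 (fun x => q0.eval x • D) s := by
        rw [show (2:ℕ) = 1 + 1 from rfl, iteratedDeriv_succ, iteratedDeriv_one,
          iteratedDeriv_succ, iteratedDeriv_one]
        exact hev.deriv.deriv.eq_of_nhds
      rw [this, hg2 s]
    have hclos : Set.EqOn (fun s => iteratedDeriv 2 (V 0) s)
        (fun s => q2.eval s • D) (closure (Set.Ioo t0 t1)) :=
      (Set.EqOn.closure (fun s hs => hIoo s hs) hcont2
        ((q2.continuous_aeval.smul continuous_const)))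
    intro s hs
    have := hclos (by rw [closure_Ioo ht.ne]; exact hs)
    simpa using this
  -- differentiability in h at 0
  have hA : HasDerivAt (fun h => iteratedDeriv 2 (V h) t)
      (deriv (fun h => iteratedDeriv 2 (V h) t) 0) 0 := by
    have : Differentiable ℝ (fun h => iteratedDeriv 2 (V h) t) :=
      ((smooth_itder V hV 2).comp (contDiff_id.prodMk contDiff_const)).differentiable (by simp)
    exact (this 0).hasDerivAt
  have hB : HasDerivAt (fun h => V h t) (deriv (fun h => V h t) 0) 0 := by
    have : Differentiable ℝ (fun h => V h t) :=
      (hV.comp (contDiff_id.prodMk contDiff_const)).differentiable (by simp)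
    exact (this 0).hasDerivAt
  -- derivative of the cross-product term
  have hC : HasDerivAt (fun h => cross (iteratedDeriv 2 (V h) t) (V h t))
      (crossL (deriv (fun h => iteratedDeriv 2 (V h) t) 0) (V 0 t)
        + crossL (iteratedDeriv 2 (V 0) t) (deriv (fun h => V h t) 0)) 0 := by
    have hc : HasDerivAt (fun h => crossL (iteratedDeriv 2 (V h) t))
        (crossL (deriv (fun h => iteratedDeriv 2 (V h) t) 0)) 0 :=
      crossL.hasFDerivAt.comp_hasDerivAt 0 hA
    simpa using hc.clm_apply hB
  -- eventually-equal functions of h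
  have hmem : Set.Icc (-1 : ℝ) 1 ∈ nhds (0 : ℝ) := Icc_mem_nhds (by norm_num) (by norm_num)
  have hev : (fun h => iteratedDeriv 3 (V h) t)
      =ᶠ[nhds (0:ℝ)] fun h => cross (iteratedDeriv 2 (V h) t) (V h t) :=
    Filter.eventuallyEq_of_mem hmem (fun h hh => hLQ h hh t htmem)
  have key : iteratedDeriv 3 Y t
      = cross (iteratedDeriv 2 Y t) (V 0 t)
        + cross (iteratedDeriv 2 (V 0) t) (deriv (fun h => V h t) 0) := by
    rw [swap_itder V hV 3 t, hev.deriv_eq, hC.deriv]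
    rw [swap_itder V hV 2 t]
    simp
  rw [key, hbase t htmem, hbase2 t htmem]
  rw [cross3_smul_right, cross3_smul_left, cross3_anticomm (iteratedDeriv 2 Y t) D]
  module
end
end

section
/- Let D ∈ ℝ³, let q₀ be a real polynomial of degree at most 2, and let Y : [t0,t1] → ℝ³ be a C³ solution of Y'''(t) + q₀(t)·(D × Y''(t)) − q₀''·(D × Y(t)) = 0. Then for every K ∈ ℝ³ with D × K = 0, the third derivative of the scalar function t ↦ ⟨Y(t), K⟩ vanishes identically on [t0,t1]; consequently ⟨Y(t), K⟩ agrees with a polynomial in t of degree at most 2. -/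
/-!
Pairing the equation with `K` kills both cross-product terms, because `ad D` is skew-adjoint:
`⟪D × u, K⟫ = -⟪u, D × K⟫ = 0`. Hence `⟪Y, K⟫''' = 0`, and Taylor's theorem with vanishing
remainder shows that `⟪Y, K⟫` equals its quadratic Taylor polynomial at `t0`.
-/

noncomputable section
open scoped RealInnerProductSpace

theorem ContinuousLinearMap.iteratedDerivWithin_comp_left {𝕜 F G : Type*}
    [NontriviallyNormedField 𝕜] [NormedAddCommGroup F] [NormedSpace 𝕜 F]
    [NormedAddCommGroup G] [NormedSpace 𝕜 G] (L : F →L[𝕜] G) {f : 𝕜 → F} {s : Set 𝕜} {n : ℕ}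
    (hf : ContDiffOn 𝕜 n f s) (hs : UniqueDiffOn 𝕜 s) {x : 𝕜} (hx : x ∈ s) :
    iteratedDerivWithin n (fun t => L (f t)) s x = L (iteratedDerivWithin n f s x) := by
  simp only [iteratedDerivWithin]
  rw [show (fun t => L (f t)) = L ∘ f from rfl,
    L.iteratedFDerivWithin_comp_left (hf x hx) hs hx le_rfl]
  rfl

theorem cross_eq_crossProduct (u v : E3) :
    cross u v = WithLp.toLp 2 (crossProduct (WithLp.ofLp u) (WithLp.ofLp v)) := by
  ext i
  fin_cases i <;> simp [cross, cross_apply]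

theorem inner_cross_eq_neg_inner_cross (a b c : E3) : ⟪cross a b, c⟫ = -⟪b, cross a c⟫ := by
  simp only [cross_eq_crossProduct, EuclideanSpace.inner_eq_star_dotProduct, star_trivial]
  rw [triple_product_permutation, triple_product_permutation, ← cross_anticomm, dotProduct_neg,
    dotProduct_comm]

theorem inner_cross_eq_zero_of_cross_eq_zero {D K : E3} (hK : cross D K = 0) (u : E3) :
    ⟪cross D u, K⟫ = 0 := by
  rw [inner_cross_eq_neg_inner_cross, hK, inner_zero_right, neg_zero]

open Polynomial in
theorem exists_polynomial_eqOn_Icc_of_iteratedDerivWithin_eq_zero {f : ℝ → ℝ} {a b : ℝ} {n : ℕ}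
    (hab : a ≤ b) (hf : ContDiffOn ℝ (n + 1) f (Set.Icc a b))
    (h : ∀ y ∈ Set.Icc a b, iteratedDerivWithin (n + 1) f (Set.Icc a b) y = 0) :
    ∃ p : ℝ[X], p.degree ≤ n ∧ ∀ x ∈ Set.Icc a b, f x = p.eval x := by
  refine ⟨∑ k ∈ Finset.range (n + 1),
    C (iteratedDerivWithin k f (Set.Icc a b) a / k.factorial) * (X - C a) ^ k, ?_, fun x hx => ?_⟩
  · refine degree_le_of_natDegree_le (natDegree_sum_le_of_forall_le _ _ fun k hk => ?_)
    refine (natDegree_C_mul_le _ _).trans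
      ((natDegree_pow_le_of_le k (natDegree_X_sub_C_le a)).trans ?_)
    simpa [Nat.lt_succ_iff] using hk
  · have hx := taylor_mean_remainder_bound hab hf hx (C := 0) (by simpa using h)
    rw [zero_mul, zero_div, norm_le_zero_iff, sub_eq_zero, taylor_within_apply] at hx
    simp only [hx, eval_finsetSum, eval_mul, eval_C, eval_pow, eval_sub, eval_X, smul_eq_mul]
    exact Finset.sum_congr rfl fun k _ => by ring

theorem stmt_7_general (t0 t1 : ℝ) (ht : t0 < t1) (D : E3) (q0 : Polynomial ℝ)
    (Y : ℝ → E3)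
    (hY : ContDiffOn ℝ 3 Y (Set.Icc t0 t1))
    (hode : ∀ t ∈ Set.Icc t0 t1,
        iteratedDerivWithin 3 Y (Set.Icc t0 t1) t +
            q0.eval t • cross D (iteratedDerivWithin 2 Y (Set.Icc t0 t1) t) -
            (q0.derivative.derivative).eval t • cross D (Y t) = 0) :
    ∀ K : E3, cross D K = 0 →
      (∀ t ∈ Set.Icc t0 t1,
          iteratedDerivWithin 3 (fun s => ⟪Y s, K⟫) (Set.Icc t0 t1) t = 0) ∧
        ∃ p : Polynomial ℝ, p.degree ≤ 2 ∧ ∀ t ∈ Set.Icc t0 t1, ⟪Y t, K⟫ = p.eval t := by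
  intro K hK
  have hYK : (fun s => ⟪Y s, K⟫) = fun s => innerSL ℝ K (Y s) :=
    funext fun s => real_inner_comm K (Y s)
  have hthird : ∀ t ∈ Set.Icc t0 t1,
      iteratedDerivWithin 3 (fun s => ⟪Y s, K⟫) (Set.Icc t0 t1) t = 0 := by
    intro t ht'
    have hodeK := congrArg (⟪·, K⟫) (hode t ht')
    simp only [inner_sub_left, inner_add_left, inner_smul_left,
      inner_cross_eq_zero_of_cross_eq_zero hK, mul_zero, add_zero, sub_zero, inner_zero_left]
      at hodeK
    rw [hYK, (innerSL ℝ K).iteratedDerivWithin_comp_left hY (uniqueDiffOn_Icc ht) ht',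
      innerSL_apply_apply, real_inner_comm, hodeK]
  have hsmooth : ContDiffOn ℝ 3 (fun s => ⟪Y s, K⟫) (Set.Icc t0 t1) :=
    hYK ▸ hY.continuousLinearMap_comp (innerSL ℝ K)
  exact ⟨hthird, exists_polynomial_eqOn_Icc_of_iteratedDerivWithin_eq_zero (n := 2) ht.le
    hsmooth hthird⟩

/-- If `Y : [t0,t1] → ℝ³` is a `C³` solution of the first variational equation
`Y''' + q₀(t)·(D × Y'') − q₀''·(D × Y) = 0` along the Lie quadratic `q₀(t)D`, then for every
`K` with `D × K = 0` the third derivative of `t ↦ ⟨Y(t), K⟩` vanishes on `[t0,t1]`;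
consequently `⟨Y(t), K⟩` agrees on `[t0,t1]` with a polynomial of degree at most `2`. -/
theorem stmt_7 (t0 t1 : ℝ) (ht : t0 < t1) (D : E3) (q0 : Polynomial ℝ)
    (hq0 : q0.degree ≤ 2) (Y : ℝ → E3)
    (hY : ContDiffOn ℝ 3 Y (Set.Icc t0 t1))
    (hode : ∀ t ∈ Set.Icc t0 t1,
        iteratedDerivWithin 3 Y (Set.Icc t0 t1) t +
            q0.eval t • cross D (iteratedDerivWithin 2 Y (Set.Icc t0 t1) t) -
            (q0.derivative.derivative).eval t • cross D (Y t) = 0) :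
    ∀ K : E3, cross D K = 0 →
      (∀ t ∈ Set.Icc t0 t1,
          iteratedDerivWithin 3 (fun s => ⟪Y s, K⟫) (Set.Icc t0 t1) t = 0) ∧
        ∃ p : Polynomial ℝ, p.degree ≤ 2 ∧ ∀ t ∈ Set.Icc t0 t1, ⟪Y t, K⟫ = p.eval t :=
  stmt_7_general t0 t1 ht D q0 Y hY hode
end
end

section
/- Let k ∈ ℂ and let y : (0,∞) → ℂ be C² with y''(t) = k·t·y'(t) − k·y(t) for all t > 0. Set z(t) := y(t)/t. Then the function t ↦ t²·e^{−kt²/2}·z'(t) is constant on (0,∞); equivalently, there is c₂ ∈ ℂ with z'(t) = c₂·t^{−2}·e^{kt²/2} for all t > 0. -/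
/-!
Since `r(t) = k t` satisfies `r = t r'`, the function `t ↦ t` solves `y'' = r y' − r' y`, and
`W = t y' − y` is the Wronskian of `y` with this solution. Abel's identity `W' = r W` gives
`W(t) = c e^{k t² / 2}`, and `z' = (y / t)' = W / t²`.
-/

noncomputable section

open Complex Set

lemma hasDerivAt_cexp_neg_mul_sq_div_two (k : ℂ) (t : ℝ) :
    HasDerivAt (fun u : ℝ => cexp (-k * u ^ 2 / 2)) (cexp (-k * t ^ 2 / 2) * (-k * t)) t := by
  have h : HasDerivAt (fun u : ℝ => -k * (u : ℂ) ^ 2 / 2) (-k * t) t := by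
    convert ((hasDerivAt_pow 2 (t : ℂ)).const_mul (-k) |>.div_const 2).comp_ofReal using 1
    push_cast
    ring
  exact h.cexp

section Wronskian

variable {k : ℂ} {y : ℝ → ℂ}

lemma hasDerivAt_cexp_mul_wronskian_eq_zero {t : ℝ} (hy : HasDerivAt y (deriv y t) t)
    (hy' : HasDerivAt (deriv y) (k * t * deriv y t - k * y t) t) :
    HasDerivAt (fun u : ℝ => cexp (-k * u ^ 2 / 2) * (u * deriv y u - y u)) 0 t := by
  have hW : HasDerivAt (fun u : ℝ => (u : ℂ) * deriv y u - y u)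
      (k * t * (t * deriv y t - y t)) t := by
    have := ((hasDerivAt_id' t).ofReal_comp.mul hy').sub hy
    exact this.congr_deriv (by push_cast; ring)
  exact ((hasDerivAt_cexp_neg_mul_sq_div_two k t).mul hW).congr_deriv (by ring)

lemma exists_cexp_mul_wronskian_eq_const {s : Set ℝ} (hs : IsOpen s) (hs' : IsPreconnected s)
    (hy : ContDiffOn ℝ 2 y s)
    (hode : ∀ t ∈ s, iteratedDeriv 2 y t = k * t * deriv y t - k * y t) :
    ∃ c, ∀ t ∈ s, cexp (-k * t ^ 2 / 2) * (t * deriv y t - y t) = c := by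
  have hdy : ∀ t ∈ s, HasDerivAt y (deriv y t) t := fun t ht =>
    ((hy.differentiableOn two_ne_zero).differentiableAt (hs.mem_nhds ht)).hasDerivAt
  have hddy : ∀ t ∈ s, HasDerivAt (deriv y) (k * t * deriv y t - k * y t) t := fun t ht => by
    rw [← hode t ht, iteratedDeriv_succ, iteratedDeriv_one]
    exact (((hy.deriv_of_isOpen hs (by norm_num)).differentiableOn one_ne_zero).differentiableAt
      (hs.mem_nhds ht)).hasDerivAt
  have hW t (ht : t ∈ s) := hasDerivAt_cexp_mul_wronskian_eq_zero (hdy t ht) (hddy t ht)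
  exact hs.exists_is_const_of_deriv_eq_zero hs'
    (fun t ht => (hW t ht).differentiableAt.differentiableWithinAt) (fun t ht => (hW t ht).deriv)

lemma deriv_div_ofReal {t : ℝ} (hy : DifferentiableAt ℝ y t) (ht : t ≠ 0) :
    deriv (fun u : ℝ => y u / u) t = (t * deriv y t - y t) / (t : ℂ) ^ 2 := by
  have : HasDerivAt (fun u : ℝ => y u / u) _ t :=
    hy.hasDerivAt.div (hasDerivAt_id' t).ofReal_comp (ofReal_ne_zero.mpr ht)
  rw [this.deriv]
  push_cast
  ring

end Wronskian

/-- Quadrature for the homogeneous equation `y'' = k·t·y' − k·y` on `(0,∞)`: with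
`z(t) := y(t)/t`, the function `t ↦ t²·e^{−kt²/2}·z'(t)` is constant, i.e. there is
`c₂ ∈ ℂ` with `z'(t) = c₂·t⁻²·e^{kt²/2}` for all `t > 0`. -/
theorem stmt_9 (k : ℂ) (y : ℝ → ℂ) (hy : ContDiffOn ℝ 2 y (Set.Ioi (0 : ℝ)))
    (hode : ∀ t : ℝ, 0 < t →
        iteratedDeriv 2 y t = k * t * deriv y t - k * y t) :
    (∀ s : ℝ, 0 < s → ∀ t : ℝ, 0 < t →
        (s : ℂ) ^ 2 * Complex.exp (-k * s ^ 2 / 2) * deriv (fun u : ℝ => y u / u) s =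
          (t : ℂ) ^ 2 * Complex.exp (-k * t ^ 2 / 2) * deriv (fun u : ℝ => y u / u) t) ∧
      ∃ c₂ : ℂ, ∀ t : ℝ, 0 < t →
        deriv (fun u : ℝ => y u / u) t = c₂ * ((t : ℂ) ^ 2)⁻¹ * Complex.exp (k * t ^ 2 / 2) := by
  obtain ⟨c, hc⟩ := exists_cexp_mul_wronskian_eq_const isOpen_Ioi isPreconnected_Ioi hy hode
  have hz : ∀ t : ℝ, 0 < t → deriv (fun u : ℝ => y u / u) t =
      (t * deriv y t - y t) / (t : ℂ) ^ 2 := fun t ht =>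
    deriv_div_ofReal ((hy.differentiableOn two_ne_zero).differentiableAt (isOpen_Ioi.mem_nhds ht))
      ht.ne'
  have hW : ∀ t : ℝ, 0 < t →
      (t : ℂ) ^ 2 * cexp (-k * t ^ 2 / 2) * deriv (fun u : ℝ => y u / u) t = c := by
    intro t ht
    rw [← hc t ht, hz t ht]
    field_simp [ofReal_ne_zero.mpr ht.ne']
  refine ⟨fun s hs t ht => by rw [hW s hs, hW t ht], c, fun t ht => ?_⟩
  have hexp : cexp (-k * t ^ 2 / 2) * cexp (k * t ^ 2 / 2) = 1 := by
    rw [← Complex.exp_add, neg_mul, neg_div, neg_add_cancel, Complex.exp_zero]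
  rw [hz t ht, ← hc t ht]
  linear_combination (-((t * deriv y t - y t) / (t : ℂ) ^ 2)) * hexp
end
end

section
/- Let V be a variation of Lie quadratics on [t0,t1] such that V(0,t) = D for all t, where D ∈ ℝ³ is a nonzero constant vector. For δ ∈ [0,1] define the first order approximate quadratic V̂₁(δ,·) : [t0,t1] → ℝ³ by V̂₁(δ,t) := D + δ·V^(1,0)(0,t). Then for every integer j ≥ 0 there exists K > 0 such that for all δ ∈ [0,1] and all t ∈ [t0,t1]: ‖V^(0,j)(δ,t) − ∂ₜʲ V̂₁(δ,t)‖ ≤ K·δ². -/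
noncomputable section
open scoped RealInnerProductSpace

namespace Stmt12Aux

open Set Filter Topology

/-- Partial derivative in the second (time) variable. -/
def pt (g : ℝ × ℝ → E3) : ℝ × ℝ → E3 := fun p => fderiv ℝ g p (0, 1)

/-- Partial derivative in the first (variation) variable. -/
def ph (g : ℝ × ℝ → E3) : ℝ × ℝ → E3 := fun p => fderiv ℝ g p (1, 0)

lemma contDiff_pd {g : ℝ × ℝ → E3} (hg : ContDiff ℝ (⊤ : ℕ∞) g) (v : ℝ × ℝ) :
    ContDiff ℝ (⊤ : ℕ∞) (fun p => fderiv ℝ g p v) := by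
  have h1 : ContDiff ℝ (⊤ : ℕ∞) (fderiv ℝ g) := hg.fderiv_right (by simp)
  exact (ContinuousLinearMap.apply ℝ E3 v).contDiff.comp h1

lemma contDiff_pt {g : ℝ × ℝ → E3} (hg : ContDiff ℝ (⊤ : ℕ∞) g) : ContDiff ℝ (⊤ : ℕ∞) (pt g) :=
  contDiff_pd hg _

lemma contDiff_ph {g : ℝ × ℝ → E3} (hg : ContDiff ℝ (⊤ : ℕ∞) g) : ContDiff ℝ (⊤ : ℕ∞) (ph g) :=
  contDiff_pd hg _

lemma contDiff_pt_iter {g : ℝ × ℝ → E3} (hg : ContDiff ℝ (⊤ : ℕ∞) g) (j : ℕ) :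
    ContDiff ℝ (⊤ : ℕ∞) (pt^[j] g) := by
  induction j generalizing g with
  | zero => exact hg
  | succ j ih =>
    rw [Function.iterate_succ_apply]
    exact ih (contDiff_pt hg)

lemma hasDerivAt_slice_t {g : ℝ × ℝ → E3} (hg : ContDiff ℝ (⊤ : ℕ∞) g) (δ t : ℝ) :
    HasDerivAt (fun s => g (δ, s)) (pt g (δ, t)) t := by
  have h1 : HasFDerivAt (fun s : ℝ => ((δ, s) : ℝ × ℝ))
      ((0 : ℝ →L[ℝ] ℝ).prod (ContinuousLinearMap.id ℝ ℝ)) t :=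
    (hasFDerivAt_const δ t).prodMk (hasFDerivAt_id t)
  have h2 : HasFDerivAt g (fderiv ℝ g (δ, t)) (δ, t) :=
    (hg.differentiable (by simp) (δ, t)).hasFDerivAt
  have h3 := (h2.comp t h1).hasDerivAt
  simpa [pt, Function.comp_def] using h3

lemma hasDerivAt_slice_h {g : ℝ × ℝ → E3} (hg : ContDiff ℝ (⊤ : ℕ∞) g) (δ t : ℝ) :
    HasDerivAt (fun h => g (h, t)) (ph g (δ, t)) δ := by
  have h1 : HasFDerivAt (fun h : ℝ => ((h, t) : ℝ × ℝ))
      ((ContinuousLinearMap.id ℝ ℝ).prod (0 : ℝ →L[ℝ] ℝ)) δ :=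
    (hasFDerivAt_id δ).prodMk (hasFDerivAt_const t δ)
  have h2 : HasFDerivAt g (fderiv ℝ g (δ, t)) (δ, t) :=
    (hg.differentiable (by simp) (δ, t)).hasFDerivAt
  have h3 := (h2.comp δ h1).hasDerivAt
  simpa [ph, Function.comp_def] using h3

lemma slice_iteratedDeriv {g : ℝ × ℝ → E3} (hg : ContDiff ℝ (⊤ : ℕ∞) g) (j : ℕ) (δ t : ℝ) :
    iteratedDeriv j (fun s => g (δ, s)) t = pt^[j] g (δ, t) := by
  induction j generalizing g with
  | zero => simp
  | succ j ih =>
    rw [iteratedDeriv_succ']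
    have hd : deriv (fun s => g (δ, s)) = fun s => pt g (δ, s) :=
      funext fun s => (hasDerivAt_slice_t hg δ s).deriv
    rw [hd, ih (contDiff_pt hg), Function.iterate_succ_apply]

lemma fderiv_pd {g : ℝ × ℝ → E3} (hg : ContDiff ℝ (⊤ : ℕ∞) g) (v : ℝ × ℝ) (p w : ℝ × ℝ) :
    fderiv ℝ (fun q => fderiv ℝ g q v) p w = fderiv ℝ (fderiv ℝ g) p w v := by
  have h1 : ContDiff ℝ (⊤ : ℕ∞) (fderiv ℝ g) := hg.fderiv_right (by simp)
  have h2 : HasFDerivAt (fderiv ℝ g) (fderiv ℝ (fderiv ℝ g) p) p :=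
    (h1.differentiable (by simp) p).hasFDerivAt
  have h3 : HasFDerivAt (fun q => fderiv ℝ g q v)
      ((ContinuousLinearMap.apply ℝ E3 v).comp (fderiv ℝ (fderiv ℝ g) p)) p :=
    (ContinuousLinearMap.apply ℝ E3 v).hasFDerivAt.comp p h2
  rw [h3.fderiv]
  rfl

lemma ph_pt_comm {g : ℝ × ℝ → E3} (hg : ContDiff ℝ (⊤ : ℕ∞) g) : ph (pt g) = pt (ph g) := by
  funext p
  have h1 : ContDiff ℝ (⊤ : ℕ∞) (fderiv ℝ g) := hg.fderiv_right (by simp)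
  have hsym : fderiv ℝ (fderiv ℝ g) p ((1 : ℝ), (0 : ℝ)) ((0 : ℝ), (1 : ℝ)) =
      fderiv ℝ (fderiv ℝ g) p ((0 : ℝ), (1 : ℝ)) ((1 : ℝ), (0 : ℝ)) :=
    second_derivative_symmetric (f := g) (f' := fderiv ℝ g)
      (fun y => (hg.differentiable (by simp) y).hasFDerivAt)
      ((h1.differentiable (by simp) p).hasFDerivAt) _ _
  show fderiv ℝ (fun q => fderiv ℝ g q (0, 1)) p (1, 0) =
      fderiv ℝ (fun q => fderiv ℝ g q (1, 0)) p (0, 1)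
  rw [fderiv_pd hg _ p _, fderiv_pd hg _ p _, hsym]

lemma ph_pt_iter_comm {g : ℝ × ℝ → E3} (hg : ContDiff ℝ (⊤ : ℕ∞) g) (j : ℕ) :
    ph (pt^[j] g) = pt^[j] (ph g) := by
  induction j generalizing g with
  | zero => rfl
  | succ j ih =>
    rw [Function.iterate_succ_apply, ih (contDiff_pt hg), ph_pt_comm hg,
      Function.iterate_succ_apply]

lemma iteratedDeriv_const' (c : E3) (j : ℕ) (t : ℝ) :
    iteratedDeriv j (fun _ : ℝ => c) t = if j = 0 then c else 0 := by
  induction j generalizing c t with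
  | zero => simp
  | succ j ih =>
    rw [iteratedDeriv_succ']
    have : deriv (fun _ : ℝ => c) = fun _ : ℝ => (0 : E3) := by
      funext s; exact deriv_const s c
    rw [this, ih 0 t]
    simp

lemma contDiff_deriv {w : ℝ → E3} (hw : ContDiff ℝ (⊤ : ℕ∞) w) : ContDiff ℝ (⊤ : ℕ∞) (deriv w) := by
  have h2 : ContDiff ℝ (⊤ : ℕ∞) (fderiv ℝ w) := hw.fderiv_right (by simp)
  have h3 := (ContinuousLinearMap.apply ℝ E3 (1 : ℝ)).contDiff.comp h2
  convert h3 using 1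
  funext s; rfl

lemma iteratedDeriv_const_add_smul {w : ℝ → E3} (hw : ContDiff ℝ (⊤ : ℕ∞) w) (c : E3) (a : ℝ)
    (j : ℕ) (t : ℝ) :
    iteratedDeriv j (fun s => c + a • w s) t =
      iteratedDeriv j (fun _ : ℝ => c) t + a • iteratedDeriv j w t := by
  induction j generalizing w c t with
  | zero => simp
  | succ j ih =>
    rw [iteratedDeriv_succ', iteratedDeriv_succ', iteratedDeriv_succ']
    have hwd : Differentiable ℝ w := hw.differentiable (by simp)
    have hd : deriv (fun s => c + a • w s) = fun s => (0 : E3) + a • deriv w s := by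
      funext s
      have h1 : HasDerivAt (fun s => c + a • w s) (a • deriv w s) s :=
        (((hwd s).hasDerivAt).const_smul a).const_add c
      rw [h1.deriv, zero_add]
    rw [hd, ih (contDiff_deriv hw) 0 t]
    have hdc : deriv (fun _ : ℝ => c) = fun _ : ℝ => (0 : E3) :=
      funext fun s => deriv_const s c
    rw [hdc]

end Stmt12Aux

/-- Approximation claim of the paper's Theorem 2: for a variation `V` of Lie quadratics with
constant base `V(0,·) = D ≠ 0`, the first order approximate quadratic
`V̂₁(δ,t) := D + δ·∂ₕV(0,t)` satisfies, for every `j`,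
`‖∂ₜʲV(δ,t) − ∂ₜʲV̂₁(δ,t)‖ ≤ K·δ²` uniformly for `δ ∈ [0,1]`, `t ∈ [t0,t1]`. -/
theorem stmt_12 (t0 t1 : ℝ) (ht : t0 < t1) (V : ℝ → ℝ → E3)
    (hV : ContDiff ℝ (⊤ : ℕ∞) (Function.uncurry V))
    (hLQ : ∀ h ∈ Set.Icc (-1 : ℝ) 1, ∀ t ∈ Set.Icc t0 t1,
        iteratedDeriv 3 (V h) t = cross (iteratedDeriv 2 (V h) t) (V h t))
    (D : E3) (hD : D ≠ 0) (hbase : ∀ t ∈ Set.Icc t0 t1, V 0 t = D) :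
    ∀ j : ℕ, ∃ K : ℝ, 0 < K ∧
      ∀ δ ∈ Set.Icc (0 : ℝ) 1, ∀ t ∈ Set.Icc t0 t1,
        ‖iteratedDeriv j (V δ) t -
            iteratedDeriv j (fun s => D + δ • deriv (fun h => V h s) 0) t‖ ≤
          K * δ ^ 2 := by
  intro j
  classical
  set f : ℝ × ℝ → E3 := Function.uncurry V with hfdef
  have hf : ContDiff ℝ (⊤ : ℕ∞) f := hV
  set g : ℝ × ℝ → E3 := Stmt12Aux.pt^[j] f with hgdef
  have hg : ContDiff ℝ (⊤ : ℕ∞) g := Stmt12Aux.contDiff_pt_iter hf j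
  have hphg : ContDiff ℝ (⊤ : ℕ∞) (Stmt12Aux.ph g) := Stmt12Aux.contDiff_ph hg
  have hB : Continuous (Stmt12Aux.ph (Stmt12Aux.ph g)) :=
    (Stmt12Aux.contDiff_ph hphg).continuous
  have hcomp : IsCompact ((Set.Icc (0:ℝ) 1) ×ˢ (Set.Icc t0 t1)) :=
    isCompact_Icc.prod isCompact_Icc
  obtain ⟨M, hM⟩ := hcomp.exists_bound_of_continuousOn hB.continuousOn
  have hmem0 : ((0:ℝ), t0) ∈ (Set.Icc (0:ℝ) 1) ×ˢ (Set.Icc t0 t1) :=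
    ⟨⟨le_rfl, zero_le_one⟩, ⟨le_rfl, ht.le⟩⟩
  have hM0 : 0 ≤ M := le_trans (norm_nonneg _) (hM _ hmem0)
  refine ⟨M + 1, by linarith, ?_⟩
  intro δ hδ t htt
  -- identify the base value
  have hbase' : ∀ t' ∈ Set.Icc t0 t1, g (0, t') = iteratedDeriv j (fun _ : ℝ => D) t' := by
    have heqIoo : Set.EqOn (fun t' => g (0, t'))
        (fun t' => iteratedDeriv j (fun _ : ℝ => D) t') (Set.Ioo t0 t1) := by
      intro t' ht'
      have h1 : iteratedDeriv j (fun s => f (0, s)) t' = g (0, t') :=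
        Stmt12Aux.slice_iteratedDeriv hf j 0 t'
      have h2 : (fun s => f (0, s)) =ᶠ[nhds t'] (fun _ : ℝ => D) := by
        filter_upwards [Ioo_mem_nhds ht'.1 ht'.2] with s hs
        exact hbase s (Set.Ioo_subset_Icc_self hs)
      have h3 := h2.iteratedDeriv_eq j
      simp only at h3 ⊢
      rw [← h1, h3]
    have hc1 : Continuous (fun t' => g (0, t')) :=
      hg.continuous.comp (continuous_const.prodMk continuous_id)
    have hc2 : Continuous (fun t' : ℝ => iteratedDeriv j (fun _ : ℝ => D) t') := by
      have : (fun t' : ℝ => iteratedDeriv j (fun _ : ℝ => D) t')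
          = fun _ : ℝ => (if j = 0 then D else 0) :=
        funext fun t' => Stmt12Aux.iteratedDeriv_const' D j t'
      rw [this]; exact continuous_const
    have := (heqIoo.closure hc1 hc2)
    intro t' ht'
    apply this
    rw [closure_Ioo ht.ne]
    exact ht'
  -- rewrite the two iterated derivatives
  have hterm1 : iteratedDeriv j (V δ) t = g (δ, t) := by
    have : V δ = fun s => f (δ, s) := rfl
    rw [this, Stmt12Aux.slice_iteratedDeriv hf j δ t]
  have hphf : ContDiff ℝ (⊤ : ℕ∞) (Stmt12Aux.ph f) := Stmt12Aux.contDiff_ph hf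
  have hw : ContDiff ℝ (⊤ : ℕ∞) (fun s => Stmt12Aux.ph f (0, s)) :=
    hphf.comp (contDiff_const.prodMk contDiff_id)
  have hterm2 : iteratedDeriv j (fun s => D + δ • deriv (fun h => V h s) 0) t
      = iteratedDeriv j (fun _ : ℝ => D) t
        + δ • Stmt12Aux.pt^[j] (Stmt12Aux.ph f) (0, t) := by
    have hder : ∀ s, deriv (fun h => V h s) 0 = Stmt12Aux.ph f (0, s) := fun s =>
      (Stmt12Aux.hasDerivAt_slice_h hf 0 s).deriv
    have hfun : (fun s => D + δ • deriv (fun h => V h s) 0)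
        = fun s => D + δ • Stmt12Aux.ph f (0, s) := by
      funext s; rw [hder s]
    rw [hfun, Stmt12Aux.iteratedDeriv_const_add_smul hw D δ j t,
      Stmt12Aux.slice_iteratedDeriv hphf j 0 t]
  -- Taylor estimate in the variation parameter
  set X : E3 := Stmt12Aux.ph g (0, t) with hXdef
  have hXeq : Stmt12Aux.pt^[j] (Stmt12Aux.ph f) (0, t) = X := by
    rw [hXdef, hgdef, Stmt12Aux.ph_pt_iter_comm hf j]
  have hχ : ∀ s : ℝ, HasDerivAt (fun h => Stmt12Aux.ph g (h, t))
      (Stmt12Aux.ph (Stmt12Aux.ph g) (s, t)) s := fun s =>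
    Stmt12Aux.hasDerivAt_slice_h hphg s t
  have hbound1 : ∀ s ∈ Set.Icc (0:ℝ) δ, ‖Stmt12Aux.ph g (s, t) - X‖ ≤ M * δ := by
    intro s hs
    have hs1 : s ∈ Set.Icc (0:ℝ) 1 := ⟨hs.1, hs.2.trans hδ.2⟩
    have h0 : (0:ℝ) ∈ Set.Icc (0:ℝ) 1 := ⟨le_rfl, zero_le_one⟩
    have := (convex_Icc (0:ℝ) 1).norm_image_sub_le_of_norm_hasDerivWithin_le
      (f := fun h => Stmt12Aux.ph g (h, t))
      (f' := fun h => Stmt12Aux.ph (Stmt12Aux.ph g) (h, t)) (C := M)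
      (fun x _ => (hχ x).hasDerivWithinAt)
      (fun x hx => hM (x, t) ⟨hx, htt⟩) h0 hs1
    calc ‖Stmt12Aux.ph g (s, t) - X‖ ≤ M * ‖s - 0‖ := this
      _ = M * s := by rw [sub_zero, Real.norm_eq_abs, abs_of_nonneg hs.1]
      _ ≤ M * δ := by nlinarith [hs.2]
  have hψ : ∀ s : ℝ, HasDerivAt (fun h => g (h, t) - h • X)
      (Stmt12Aux.ph g (s, t) - X) s := fun s =>
    (Stmt12Aux.hasDerivAt_slice_h hg s t).sub (by simpa using (hasDerivAt_id s).smul_const X)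
  have hmain := (convex_Icc (0:ℝ) δ).norm_image_sub_le_of_norm_hasDerivWithin_le
    (f := fun h => g (h, t) - h • X)
    (f' := fun h => Stmt12Aux.ph g (h, t) - X) (C := M * δ)
    (fun x _ => (hψ x).hasDerivWithinAt) hbound1
    ⟨le_rfl, hδ.1⟩ ⟨hδ.1, le_rfl⟩
  have hnorm : ‖(g (δ, t) - δ • X) - (g (0, t) - (0:ℝ) • X)‖ ≤ M * δ * ‖δ - 0‖ := hmain
  rw [hterm1, hterm2, hXeq, ← hbase' t htt]
  have heq : g (δ, t) - (g (0, t) + δ • X)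
      = (g (δ, t) - δ • X) - (g (0, t) - (0:ℝ) • X) := by
    rw [zero_smul, sub_zero]; abel
  rw [heq]
  calc ‖(g (δ, t) - δ • X) - (g (0, t) - (0:ℝ) • X)‖ ≤ M * δ * ‖δ - 0‖ := hnorm
    _ = M * δ ^ 2 := by
        rw [sub_zero, Real.norm_eq_abs, abs_of_nonneg hδ.1]; ring
    _ ≤ (M + 1) * δ ^ 2 := by nlinarith [sq_nonneg δ]
end
end

section
/- Let V be a variation of Lie quadratics on [t0,t1] such that V(0,t) = D for all t, where D ∈ ℝ³ is a nonzero constant vector. Set Y₁ := V^(1,0)(0,·), Y₂ := V^(2,0)(0,·), and for δ ∈ [0,1] define the second order approximate quadratic V̂₂(δ,t) := D + δ·Y₁(t) + (δ²/2)·Y₂(t). Then for every integer j ≥ 0 there exists K > 0 such that for all δ ∈ [0,1] and all t ∈ [t0,t1]: ‖V^(0,j)(δ,t) − ∂ₜʲ V̂₂(δ,t)‖ ≤ K·δ³. -/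
noncomputable section
open scoped RealInnerProductSpace
open scoped ContDiff
open Set

namespace Stmt14Aux

lemma two_le_infty : (2 : WithTop ℕ∞) ≤ ∞ := by
  rw [show ((2 : WithTop ℕ∞)) = ((2 : ℕ∞) : WithTop ℕ∞) by rfl]
  exact WithTop.coe_le_coe.mpr le_top

lemma natCast_le_infty (n : ℕ) : ((n : ℕ) : WithTop ℕ∞) ≤ ∞ :=
  (WithTop.coe_le_coe (α := ℕ∞)).mpr le_top

/-- Directional partial derivative in direction `v`. -/
def pd (v : ℝ × ℝ) (g : ℝ × ℝ → E3) : ℝ × ℝ → E3 := fun p => fderiv ℝ g p v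

lemma pd_contDiff (v : ℝ × ℝ) {g : ℝ × ℝ → E3} (hg : ContDiff ℝ ∞ g) :
    ContDiff ℝ ∞ (pd v g) :=
  (hg.fderiv_right (m := ∞) (le_of_eq (show ∞ + 1 = ∞ from rfl))).clm_apply contDiff_const

lemma pd_iter_contDiff (v : ℝ × ℝ) (k : ℕ) {g : ℝ × ℝ → E3} (hg : ContDiff ℝ ∞ g) :
    ContDiff ℝ ∞ ((pd v)^[k] g) := by
  induction k generalizing g with
  | zero => exact hg
  | succ k ih => rw [Function.iterate_succ_apply]; exact ih (pd_contDiff v hg)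

lemma hasDerivAt_slice_t {g : ℝ × ℝ → E3} (hg : ContDiff ℝ ∞ g) (a b : ℝ) :
    HasDerivAt (fun s => g (a, s)) (pd (0, 1) g (a, b)) b := by
  have h1 : HasDerivAt (fun s : ℝ => ((a : ℝ), s)) ((0 : ℝ), (1 : ℝ)) b :=
    (hasDerivAt_const b a).prodMk (hasDerivAt_id b)
  exact (hg.differentiable (by simp) (a, b)).hasFDerivAt.comp_hasDerivAt b h1

lemma hasDerivAt_slice_h {g : ℝ × ℝ → E3} (hg : ContDiff ℝ ∞ g) (a b : ℝ) :
    HasDerivAt (fun h => g (h, b)) (pd (1, 0) g (a, b)) a := by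
  have h1 : HasDerivAt (fun h : ℝ => (h, (b : ℝ))) ((1 : ℝ), (0 : ℝ)) a :=
    (hasDerivAt_id a).prodMk (hasDerivAt_const a b)
  exact (hg.differentiable (by simp) (a, b)).hasFDerivAt.comp_hasDerivAt a h1

lemma iter_slice_t {g : ℝ × ℝ → E3} (hg : ContDiff ℝ ∞ g) (j : ℕ) (a b : ℝ) :
    iteratedDeriv j (fun s => g (a, s)) b = (pd (0, 1))^[j] g (a, b) := by
  induction j generalizing b with
  | zero => simp
  | succ j ih =>
    rw [iteratedDeriv_succ]
    have h : iteratedDeriv j (fun s => g (a, s)) = fun b => (pd (0, 1))^[j] g (a, b) :=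
      funext fun b => ih b
    rw [h, Function.iterate_succ_apply']
    exact (hasDerivAt_slice_t (pd_iter_contDiff _ j hg) a b).deriv

lemma iter_slice_h {g : ℝ × ℝ → E3} (hg : ContDiff ℝ ∞ g) (j : ℕ) (a b : ℝ) :
    iteratedDeriv j (fun h => g (h, b)) a = (pd (1, 0))^[j] g (a, b) := by
  induction j generalizing a with
  | zero => simp
  | succ j ih =>
    rw [iteratedDeriv_succ]
    have h : iteratedDeriv j (fun h => g (h, b)) = fun a => (pd (1, 0))^[j] g (a, b) :=
      funext fun a => ih a
    rw [h, Function.iterate_succ_apply']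
    exact (hasDerivAt_slice_h (pd_iter_contDiff _ j hg) a b).deriv

lemma pd_apply_eq {g : ℝ × ℝ → E3} (hg : ContDiff ℝ ∞ g) (v w : ℝ × ℝ) (p : ℝ × ℝ) :
    pd v (pd w g) p = fderiv ℝ (fderiv ℝ g) p v w := by
  have hdf : DifferentiableAt ℝ (fderiv ℝ g) p :=
    (hg.fderiv_right (m := ∞) (le_of_eq (show ∞ + 1 = ∞ from rfl))).differentiable
      (by simp) p
  have h1 : pd v (pd w g) p = fderiv ℝ (fun q => (fderiv ℝ g q) w) p v := rfl
  rw [h1, fderiv_clm_apply hdf (differentiableAt_const w)]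
  simp

lemma pd_swap {g : ℝ × ℝ → E3} (hg : ContDiff ℝ ∞ g) (v w : ℝ × ℝ) (p : ℝ × ℝ) :
    pd v (pd w g) p = pd w (pd v g) p := by
  rw [pd_apply_eq hg, pd_apply_eq hg]
  exact hg.contDiffAt.isSymmSndFDerivAt (by rw [minSmoothness_of_isRCLikeNormedField]; exact two_le_infty) v w

lemma pd_comm_iter {g : ℝ × ℝ → E3} (hg : ContDiff ℝ ∞ g) (v w : ℝ × ℝ) (j : ℕ) :
    pd v ((pd w)^[j] g) = (pd w)^[j] (pd v g) := by
  induction j generalizing g with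
  | zero => rfl
  | succ j ih =>
    rw [Function.iterate_succ_apply, ih (pd_contDiff w hg)]
    have h : pd v (pd w g) = pd w (pd v g) := funext (pd_swap hg v w)
    rw [h, ← Function.iterate_succ_apply]

lemma smooth_iteratedDeriv {u : ℝ → E3} (hu : ContDiff ℝ ∞ u) (n : ℕ) :
    ContDiff ℝ ∞ (iteratedDeriv n u) := by
  rw [iteratedDeriv_eq_iterate]; exact hu.iterate_deriv n

/-- Within-derivatives on a uniqueDiff set agree with full derivatives for smooth functions. -/
lemma iterWithin_eq {u : ℝ → E3} (hu : ContDiff ℝ ∞ u) {s : Set ℝ} (hs : UniqueDiffOn ℝ s)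
    (n : ℕ) : ∀ x ∈ s, iteratedDerivWithin n u s x = iteratedDeriv n u x := by
  induction n with
  | zero => intro x _; simp
  | succ n ih =>
    intro x hx
    rw [iteratedDerivWithin_succ, iteratedDeriv_succ]
    rw [derivWithin_congr (fun y hy => ih y hy) (ih x hx)]
    exact ((smooth_iteratedDeriv hu n).differentiable (by simp) x).derivWithin (hs x hx)

/-- Iterated derivatives of an affine combination `c + a • u + b • v`. -/
lemma iteratedDeriv_comb (c : E3) {u v : ℝ → E3} (hu : ContDiff ℝ ∞ u) (hv : ContDiff ℝ ∞ v)
    (a b : ℝ) (j : ℕ) :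
    iteratedDeriv j (fun s => c + a • u s + b • v s) =
      fun t => (if j = 0 then c else 0) + a • iteratedDeriv j u t + b • iteratedDeriv j v t := by
  induction j with
  | zero => funext t; simp
  | succ j ih =>
    funext t
    rw [iteratedDeriv_succ, ih]
    have hdu : DifferentiableAt ℝ (iteratedDeriv j u) t :=
      (smooth_iteratedDeriv hu j).differentiable (by simp) t
    have hdv : DifferentiableAt ℝ (iteratedDeriv j v) t :=
      (smooth_iteratedDeriv hv j).differentiable (by simp) t
    have h1 : deriv (fun t => (if j = 0 then c else 0) + a • iteratedDeriv j u t
        + b • iteratedDeriv j v t) t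
        = a • deriv (iteratedDeriv j u) t + b • deriv (iteratedDeriv j v) t := by
      rw [deriv_fun_add (show DifferentiableAt ℝ (fun y => (if j = 0 then c else 0)
          + a • iteratedDeriv j u y) t from ((hdu.const_smul a).const_add _))
          (show DifferentiableAt ℝ (fun y => b • iteratedDeriv j v y) t from hdv.const_smul b),
        deriv_const_add, deriv_fun_const_smul a hdu, deriv_fun_const_smul b hdv]
    rw [h1, ← iteratedDeriv_succ, ← iteratedDeriv_succ]
    simp

/-- Derivatives of a function that is constant on a closed interval vanish on the interval. -/
lemma base_vanish {W : ℝ → E3} (hW : ContDiff ℝ ∞ W) {t0 t1 : ℝ} (ht : t0 < t1) {D : E3}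
    (hbase : ∀ t ∈ Icc t0 t1, W t = D) (k : ℕ) :
    ∀ t ∈ Icc t0 t1, iteratedDeriv k W t = if k = 0 then D else 0 := by
  have hUD : UniqueDiffOn ℝ (Icc t0 t1) := uniqueDiffOn_Icc ht
  induction k with
  | zero => intro t htt; simpa using hbase t htt
  | succ k ih =>
    intro t htt
    rw [iteratedDeriv_succ]
    have hdiff : DifferentiableAt ℝ (iteratedDeriv k W) t :=
      (smooth_iteratedDeriv hW k).differentiable (by simp) t
    rw [← hdiff.derivWithin (hUD t htt),
      derivWithin_congr (fun y hy => ih y hy) (ih t htt),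
      (hasDerivWithinAt_const t (Icc t0 t1) _).derivWithin (hUD t htt)]
    simp

end Stmt14Aux

open Stmt14Aux

/-- Approximation claim of the paper's Theorem 3: for a variation `V` of Lie quadratics with
constant base `V(0,·) = D ≠ 0`, the second order approximate quadratic
`V̂₂(δ,t) := D + δ·Y₁(t) + (δ²/2)·Y₂(t)` (with `Y₁ := ∂ₕV(0,·)`, `Y₂ := ∂ₕ²V(0,·)`)
satisfies, for every `j`, `‖∂ₜʲV(δ,t) − ∂ₜʲV̂₂(δ,t)‖ ≤ K·δ³` uniformly for `δ ∈ [0,1]`,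
`t ∈ [t0,t1]`. -/
theorem stmt_14 (t0 t1 : ℝ) (ht : t0 < t1) (V : ℝ → ℝ → E3)
    (hV : ContDiff ℝ (⊤ : ℕ∞) (Function.uncurry V))
    (hLQ : ∀ h ∈ Set.Icc (-1 : ℝ) 1, ∀ t ∈ Set.Icc t0 t1,
        iteratedDeriv 3 (V h) t = cross (iteratedDeriv 2 (V h) t) (V h t))
    (D : E3) (hD : D ≠ 0) (hbase : ∀ t ∈ Set.Icc t0 t1, V 0 t = D) :
    ∀ j : ℕ, ∃ K : ℝ, 0 < K ∧
      ∀ δ ∈ Set.Icc (0 : ℝ) 1, ∀ t ∈ Set.Icc t0 t1,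
        ‖iteratedDeriv j (V δ) t -
            iteratedDeriv j
              (fun s => D + δ • deriv (fun h => V h s) 0 +
                (δ ^ 2 / 2) • iteratedDeriv 2 (fun h => V h s) 0) t‖ ≤
          K * δ ^ 3 := by
  intro j
  have hf : ContDiff ℝ ∞ (Function.uncurry V) := hV.of_le (by simp)
  set f : ℝ × ℝ → E3 := Function.uncurry V with hfdef
  have hg : ContDiff ℝ ∞ ((pd (0, 1))^[j] f) := pd_iter_contDiff _ j hf
  -- bound for the third h-derivative on the compact rectangle
  have hP : ContDiff ℝ ∞ ((pd (1, 0))^[3] ((pd (0, 1))^[j] f)) := pd_iter_contDiff _ 3 hg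
  obtain ⟨M, hM⟩ :
      ∃ M, ∀ p ∈ Icc (0 : ℝ) 1 ×ˢ Icc t0 t1, ‖(pd (1, 0))^[3] ((pd (0, 1))^[j] f) p‖ ≤ M :=
    ((isCompact_Icc.prod isCompact_Icc).exists_bound_of_continuousOn
      (hP.continuous.continuousOn))
  have hM0 : 0 ≤ M :=
    le_trans (norm_nonneg _) (hM (0, t0) ⟨⟨le_rfl, zero_le_one⟩, ⟨le_rfl, ht.le⟩⟩)
  refine ⟨M / 2 + 1, by positivity, ?_⟩
  intro δ hδ t htt
  have hφ : ContDiff ℝ ∞ (fun h => (pd (0, 1))^[j] f (h, t)) :=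
    hg.comp (contDiff_id.prodMk contDiff_const)
  have hUD : UniqueDiffOn ℝ (Icc (0 : ℝ) 1) := uniqueDiffOn_Icc zero_lt_one
  -- Taylor's theorem
  have hC : ∀ y ∈ Icc (0 : ℝ) 1,
      ‖iteratedDerivWithin (2 + 1) (fun h => (pd (0, 1))^[j] f (h, t)) (Icc (0 : ℝ) 1) y‖ ≤ M := by
    intro y hy
    rw [iterWithin_eq hφ hUD (2 + 1) y hy, iter_slice_h hg 3 y t]
    exact hM (y, t) ⟨hy, htt⟩
  have htaylor := taylor_mean_remainder_bound (f := fun h => (pd (0, 1))^[j] f (h, t))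
    (a := 0) (b := 1) (C := M) (n := 2)
    zero_le_one ((hφ.of_le (natCast_le_infty 3)).contDiffOn) hδ hC
  -- compute the Taylor polynomial
  have hT : taylorWithinEval (fun h => (pd (0, 1))^[j] f (h, t)) 2 (Icc 0 1) 0 δ =
      (pd (0, 1))^[j] f (0, t)
        + δ • iteratedDeriv 1 (fun h => (pd (0, 1))^[j] f (h, t)) 0
        + (δ ^ 2 / 2) • iteratedDeriv 2 (fun h => (pd (0, 1))^[j] f (h, t)) 0 := by
    have h0 : (0 : ℝ) ∈ Icc (0 : ℝ) 1 := ⟨le_rfl, zero_le_one⟩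
    rw [taylor_within_apply]
    simp only [Finset.sum_range_succ, Finset.sum_range_zero,
      iterWithin_eq hφ hUD 0 0 h0, iterWithin_eq hφ hUD 1 0 h0, iterWithin_eq hφ hUD 2 0 h0]
    norm_num [Nat.factorial]
    module
  -- identify the Taylor data
  have hφδ : (pd (0, 1))^[j] f (δ, t) = iteratedDeriv j (V δ) t :=
    (iter_slice_t hf j δ t).symm
  have hφ1 : iteratedDeriv 1 (fun h => (pd (0, 1))^[j] f (h, t)) 0 =
      iteratedDeriv j (fun s => pd (1, 0) f (0, s)) t := by
    rw [iteratedDeriv_one]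
    have h1 : deriv (fun h => (pd (0, 1))^[j] f (h, t)) 0 =
        pd (1, 0) ((pd (0, 1))^[j] f) (0, t) := (hasDerivAt_slice_h hg 0 t).deriv
    rw [h1]
    exact (congrFun (pd_comm_iter hf (1, 0) (0, 1) j) (0, t)).trans
      (iter_slice_t (pd_contDiff _ hf) j 0 t).symm
  have hφ2 : iteratedDeriv 2 (fun h => (pd (0, 1))^[j] f (h, t)) 0 =
      iteratedDeriv j (fun s => (pd (1, 0))^[2] f (0, s)) t := by
    rw [iter_slice_h hg 2 0 t]
    have hcomm : (pd (1, 0))^[2] ((pd (0, 1))^[j] f) = (pd (0, 1))^[j] ((pd (1, 0))^[2] f) := by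
      rw [show (2 : ℕ) = 1 + 1 from rfl, Function.iterate_add_apply, Function.iterate_one,
        pd_comm_iter hf (1, 0) (0, 1) j,
        pd_comm_iter (pd_contDiff _ hf) (1, 0) (0, 1) j,
        Function.iterate_add_apply, Function.iterate_one]
    exact (congrFun hcomm (0, t)).trans (iter_slice_t (pd_iter_contDiff _ 2 hf) j 0 t).symm
  have hφ0 : (pd (0, 1))^[j] f (0, t) = (if j = 0 then D else 0) := by
    have hV0 : ContDiff ℝ ∞ (V 0) := hf.comp (contDiff_const.prodMk contDiff_id)
    have h1 : (pd (0, 1))^[j] f (0, t) = iteratedDeriv j (V 0) t :=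
      (iter_slice_t hf j 0 t).symm
    rw [h1, base_vanish hV0 ht hbase j t htt]
  -- compute the iterated derivative of the approximate quadratic
  have hY1 : ∀ s : ℝ, deriv (fun h => V h s) 0 = pd (1, 0) f (0, s) := fun s =>
    (hasDerivAt_slice_h hf 0 s).deriv
  have hY2 : ∀ s : ℝ, iteratedDeriv 2 (fun h => V h s) 0 = (pd (1, 0))^[2] f (0, s) := fun s =>
    iter_slice_h hf 2 0 s
  have hY1s : ContDiff ℝ ∞ (fun s => pd (1, 0) f (0, s)) :=
    (pd_contDiff _ hf).comp (contDiff_const.prodMk contDiff_id)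
  have hY2s : ContDiff ℝ ∞ (fun s => (pd (1, 0))^[2] f (0, s)) :=
    (pd_iter_contDiff _ 2 hf).comp (contDiff_const.prodMk contDiff_id)
  have hrhs : iteratedDeriv j
      (fun s => D + δ • deriv (fun h => V h s) 0 +
        (δ ^ 2 / 2) • iteratedDeriv 2 (fun h => V h s) 0) t =
      (if j = 0 then D else 0)
        + δ • iteratedDeriv j (fun s => pd (1, 0) f (0, s)) t
        + (δ ^ 2 / 2) • iteratedDeriv j (fun s => (pd (1, 0))^[2] f (0, s)) t := by
    have hre : (fun s => D + δ • deriv (fun h => V h s) 0 +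
        (δ ^ 2 / 2) • iteratedDeriv 2 (fun h => V h s) 0) =
        fun s => D + δ • pd (1, 0) f (0, s) + (δ ^ 2 / 2) • (pd (1, 0))^[2] f (0, s) :=
      funext fun s => by rw [hY1 s, hY2 s]
    rw [hre, iteratedDeriv_comb D hY1s hY2s δ (δ ^ 2 / 2) j]
  -- put it together
  have key : iteratedDeriv j (V δ) t -
      iteratedDeriv j (fun s => D + δ • deriv (fun h => V h s) 0 +
        (δ ^ 2 / 2) • iteratedDeriv 2 (fun h => V h s) 0) t =
      (pd (0, 1))^[j] f (δ, t) -
        taylorWithinEval (fun h => (pd (0, 1))^[j] f (h, t)) 2 (Icc 0 1) 0 δ := by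
    rw [hrhs, hT, hφδ, hφ0, hφ1, hφ2]
  rw [key]
  refine htaylor.trans ?_
  have hδ0 : 0 ≤ δ := hδ.1
  rw [show ((Nat.factorial 2 : ℕ) : ℝ) = 2 by norm_num [Nat.factorial], sub_zero]
  nlinarith [pow_nonneg hδ0 3, mul_nonneg hM0 (pow_nonneg hδ0 3)]
end
end

section
/- Let F0, F1, F2 be a positively oriented orthonormal basis of ℝ³ (F0 × F1 = F2, F1 × F2 = F0, F2 × F0 = F1), and let d > 0, β > 0, δ > 0, c₀, c₁, c₂, a₁₁, a₁₂, γ, t0 ∈ ℝ and A₀ ∈ ℝ³ orthogonal to F0. Set B := β(cos γ · F1 + sin γ · F2), ρ := −2c₂/(d²β), and define V̂₁(t) := dF0 + δ·((c₀ + c₁(t−t0) + c₂(t−t0)²)F0 + A₀ + (t−t0)(a₁₁F1 + a₁₂F2) + cos(d(t−t0))B − sin(d(t−t0))(F0 × B)). Set ĉ := δ²(4c₂² + d⁴β²) and Ĉ := δ(2c₂F0 − d·a₁₂F1 + d·a₁₁F2). Then for all s, ‖V̂₁'''(s)‖² = δ²d⁶β², and for all t ≥ t0: √ĉ · ∫_{t0}^{t}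 (ĉ − ⟨Ĉ, V̂₁''(s)⟩)/‖V̂₁'''(s)‖² ds = δ·√(ρ²+1)·( (t−t0)β + (a₁₁(cos(γ − d(t−t0)) − cos γ) + a₁₂(sin(γ − d(t−t0)) − sin γ))/d² ). -/
noncomputable section
open scoped RealInnerProductSpace

/-! Rotating `B` about `F0` shows that, in the frame `F0, F1, F2`, the oscillating part of `V̂₁` is
the uniform circular motion `δβ (cos φ F1 + sin φ F2)` with phase `φ = γ - d (t - t0)`; the rest is
a quadratic polynomial in `t`. Derivatives of such curves are again of this form, so `V̂₁'''` is
that circular motion scaled by `d³`, of constant length `δ d³ β`, and the integrand collapses to the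
trigonometric polynomial `(dβ - a₁₂ cos φ + a₁₁ sin φ) / (d³β)`, integrated by its antiderivative. -/

open Real Matrix

namespace E3

theorem cross_eq_crossProduct (u v : E3) : cross u v = WithLp.toLp 2 (u.ofLp ⨯₃ v.ofLp) := rfl

theorem cross_add_right (u v w : E3) : cross u (v + w) = cross u v + cross u w := by
  simp [cross_eq_crossProduct]

theorem cross_smul_right (r : ℝ) (u v : E3) : cross u (r • v) = r • cross u v := by
  simp [cross_eq_crossProduct]

theorem cross_anticomm (u v : E3) : cross u v = -cross v u := by
  rw [cross_eq_crossProduct, cross_eq_crossProduct, ← _root_.cross_anticomm]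
  rfl

theorem inner_self_cross (u v : E3) : ⟪u, cross u v⟫ = 0 := by
  rw [EuclideanSpace.inner_eq_star_dotProduct, star_trivial, dotProduct_comm]
  exact dot_self_cross _ _

theorem inner_cross_self (u v : E3) : ⟪v, cross u v⟫ = 0 := by
  rw [EuclideanSpace.inner_eq_star_dotProduct, star_trivial, dotProduct_comm]
  exact dot_cross_self _ _

section Frame

variable {F0 F1 F2 : E3} (h01 : cross F0 F1 = F2) (h20 : cross F2 F0 = F1)
include h01 h20

theorem orthonormal_of_cross_eq (hn0 : ‖F0‖ = 1) (hn1 : ‖F1‖ = 1) (hn2 : ‖F2‖ = 1) :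
    Orthonormal ℝ ![F0, F1, F2] := by
  have e01 : ⟪F0, F1⟫ = 0 := h20 ▸ inner_cross_self F2 F0
  have e02 : ⟪F0, F2⟫ = 0 := h01 ▸ inner_self_cross F0 F1
  have e12 : ⟪F1, F2⟫ = 0 := h01 ▸ inner_cross_self F0 F1
  rw [orthonormal_iff_ite]
  intro i j
  fin_cases i <;> fin_cases j <;>
    simp [hn0, hn1, hn2, e01, e02, e12, real_inner_comm F0, real_inner_comm F1]

theorem cross_smul_add_smul (x y : ℝ) : cross F0 (x • F1 + y • F2) = x • F2 - y • F1 := by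
  rw [cross_add_right, cross_smul_right, cross_smul_right, h01, cross_anticomm, h20,
    smul_neg, sub_eq_add_neg]

end Frame

end E3

theorem Orthonormal.inner_smul_add_smul_add_smul {E : Type*} [NormedAddCommGroup E]
    [InnerProductSpace ℝ E] {F0 F1 F2 : E} (hF : Orthonormal ℝ ![F0, F1, F2])
    (x0 x1 x2 y0 y1 y2 : ℝ) :
    ⟪x0 • F0 + x1 • F1 + x2 • F2, y0 • F0 + y1 • F1 + y2 • F2⟫ = x0 * y0 + x1 * y1 + x2 * y2 := by
  simpa [Fin.sum_univ_three, add_assoc] using hF.inner_sum ![x0, x1, x2] ![y0, y1, y2] Finset.univ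

section QuadraticHelix

variable {E : Type*} [NormedAddCommGroup E] [NormedSpace ℝ E]

def quadraticHelix (a d γ : ℝ) (P Q R U W : E) (t : ℝ) : E :=
  P + (t - a) • Q + (t - a) ^ 2 • R + cos (γ - d * (t - a)) • U + sin (γ - d * (t - a)) • W

variable (a d γ : ℝ) (P Q R U W : E)

theorem hasDerivAt_quadraticHelix (t : ℝ) :
    HasDerivAt (quadraticHelix a d γ P Q R U W)
      (quadraticHelix a d γ Q ((2 : ℝ) • R) 0 (-d • W) (d • U) t) t := by
  have hu : HasDerivAt (fun t => t - a) 1 t := (hasDerivAt_id t).sub_const a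
  have hφ : HasDerivAt (fun t => γ - d * (t - a)) (-(d * 1)) t := (hu.const_mul d).const_sub γ
  have H := ((((hasDerivAt_const t P).add (hu.smul_const Q)).add ((hu.pow 2).smul_const R)).add
    (((hasDerivAt_cos _).comp t hφ).smul_const U)).add (((hasDerivAt_sin _).comp t hφ).smul_const W)
  refine H.congr_deriv ?_
  simp only [quadraticHelix]
  module

theorem deriv_quadraticHelix :
    deriv (quadraticHelix a d γ P Q R U W) =
      quadraticHelix a d γ Q ((2 : ℝ) • R) 0 (-d • W) (d • U) :=
  funext fun t => (hasDerivAt_quadraticHelix a d γ P Q R U W t).deriv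

theorem iteratedDeriv_two_quadraticHelix :
    iteratedDeriv 2 (quadraticHelix a d γ P Q R U W) =
      quadraticHelix a d γ ((2 : ℝ) • R) 0 0 (-d • d • U) (d • -d • W) := by
  simp only [iteratedDeriv_succ', iteratedDeriv_zero, deriv_quadraticHelix, smul_zero]

theorem iteratedDeriv_three_quadraticHelix :
    iteratedDeriv 3 (quadraticHelix a d γ P Q R U W) =
      quadraticHelix a d γ 0 0 0 (-d • d • -d • W) (d • -d • d • U) := by
  simp only [iteratedDeriv_succ', iteratedDeriv_zero, deriv_quadraticHelix, smul_zero]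

end QuadraticHelix

theorem integral_sub_mul_cos_add_mul_sin {d : ℝ} (hd : d ≠ 0) (k p q γ a t : ℝ) :
    ∫ s in a..t, (k - p * cos (γ - d * (s - a)) + q * sin (γ - d * (s - a))) =
      k * (t - a) +
        (p * (sin (γ - d * (t - a)) - sin γ) + q * (cos (γ - d * (t - a)) - cos γ)) / d := by
  have hG : ∀ s, HasDerivAt
      (fun s => k * (s - a) + (p * sin (γ - d * (s - a)) + q * cos (γ - d * (s - a))) / d)
      (k - p * cos (γ - d * (s - a)) + q * sin (γ - d * (s - a))) s := by
    intro s
    have hφ : HasDerivAt (fun s => γ - d * (s - a)) (-(d * 1)) s :=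
      (((hasDerivAt_id s).sub_const a).const_mul d).const_sub γ
    have H := (((hasDerivAt_id s).sub_const a).const_mul k).add
      (((((hasDerivAt_sin _).comp s hφ).const_mul p).add
        (((hasDerivAt_cos _).comp s hφ).const_mul q)).div_const d)
    refine H.congr_deriv ?_
    field_simp
    ring
  rw [intervalIntegral.integral_eq_sub_of_hasDerivAt (fun s _ => hG s)
    (by apply Continuous.intervalIntegrable; fun_prop)]
  simp only [sub_self, mul_zero, sub_zero]
  ring

theorem stmt_16_general (F0 F1 F2 : E3)
    (hn0 : ‖F0‖ = 1) (hn1 : ‖F1‖ = 1) (hn2 : ‖F2‖ = 1)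
    (h01 : cross F0 F1 = F2) (h20 : cross F2 F0 = F1)
    (d β δ : ℝ) (hd : 0 < d) (hβ : 0 < β) (hδ : 0 < δ)
    (c₀ c₁ c₂ a11 a12 γ t0 : ℝ) (A₀ : E3)
    (B : E3) (hB : B = β • (Real.cos γ • F1 + Real.sin γ • F2))
    (ρ : ℝ) (hρ : ρ = -(2 * c₂) / (d ^ 2 * β))
    (Vhat : ℝ → E3)
    (hVhat : ∀ t : ℝ,
        Vhat t = d • F0 +
          δ • ((c₀ + c₁ * (t - t0) + c₂ * (t - t0) ^ 2) • F0 + A₀ +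
              (t - t0) • (a11 • F1 + a12 • F2) +
              Real.cos (d * (t - t0)) • B - Real.sin (d * (t - t0)) • cross F0 B))
    (chat : ℝ) (hchat : chat = δ ^ 2 * (4 * c₂ ^ 2 + d ^ 4 * β ^ 2))
    (Chat : E3) (hChat : Chat = δ • ((2 * c₂) • F0 - (d * a12) • F1 + (d * a11) • F2)) :
    (∀ s : ℝ, ‖iteratedDeriv 3 Vhat s‖ ^ 2 = δ ^ 2 * d ^ 6 * β ^ 2) ∧
      ∀ t : ℝ, t0 ≤ t →
        Real.sqrt chat *
            ∫ s in t0..t,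
              (chat - ⟪Chat, iteratedDeriv 2 Vhat s⟫) / ‖iteratedDeriv 3 Vhat s‖ ^ 2 =
          δ * Real.sqrt (ρ ^ 2 + 1) *
            ((t - t0) * β +
              (a11 * (Real.cos (γ - d * (t - t0)) - Real.cos γ) +
                  a12 * (Real.sin (γ - d * (t - t0)) - Real.sin γ)) / d ^ 2) := by
  have hF := E3.orthonormal_of_cross_eq h01 h20 hn0 hn1 hn2
  have hV : Vhat = quadraticHelix t0 d γ (d • F0 + δ • (c₀ • F0 + A₀))
      (δ • (c₁ • F0 + a11 • F1 + a12 • F2)) ((δ * c₂) • F0) ((δ * β) • F1) ((δ * β) • F2) := by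
    funext t
    rw [hVhat, hB, E3.cross_smul_right, E3.cross_smul_add_smul h01 h20, quadraticHelix,
      cos_sub, sin_sub]
    module
  have hV2 (s : ℝ) : iteratedDeriv 2 Vhat s = (2 * δ * c₂) • F0 +
      (-(δ * β * d ^ 2) * cos (γ - d * (s - t0))) • F1 +
      (-(δ * β * d ^ 2) * sin (γ - d * (s - t0))) • F2 := by
    rw [hV, iteratedDeriv_two_quadraticHelix, quadraticHelix]
    module
  have hV3 (s : ℝ) : iteratedDeriv 3 Vhat s = (0 : ℝ) • F0 +
      (-(δ * β * d ^ 3) * sin (γ - d * (s - t0))) • F1 +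
      (δ * β * d ^ 3 * cos (γ - d * (s - t0))) • F2 := by
    rw [hV, iteratedDeriv_three_quadraticHelix, quadraticHelix]
    module
  have hC : Chat = (2 * δ * c₂) • F0 + (-(δ * d * a12)) • F1 + (δ * d * a11) • F2 := by
    rw [hChat]
    module
  have hnorm (s : ℝ) : ‖iteratedDeriv 3 Vhat s‖ ^ 2 = δ ^ 2 * d ^ 6 * β ^ 2 := by
    rw [← real_inner_self_eq_norm_sq, hV3, hF.inner_smul_add_smul_add_smul]
    linear_combination (δ * β * d ^ 3) ^ 2 * sin_sq_add_cos_sq (γ - d * (s - t0))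
  have hintegrand (s : ℝ) :
      (chat - ⟪Chat, iteratedDeriv 2 Vhat s⟫) / ‖iteratedDeriv 3 Vhat s‖ ^ 2 =
        (d * β - a12 * cos (γ - d * (s - t0)) + a11 * sin (γ - d * (s - t0))) / (d ^ 3 * β) := by
    rw [hnorm, hV2, hC, hF.inner_smul_add_smul_add_smul, hchat]
    field_simp
    ring
  have hsqrt : √chat = δ * d ^ 2 * β * √(ρ ^ 2 + 1) := by
    have hchat' : chat = (δ * d ^ 2 * β) ^ 2 * (ρ ^ 2 + 1) := by
      rw [hchat, hρ]
      field_simp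
      ring
    rw [hchat', sqrt_mul (sq_nonneg _), sqrt_sq (by positivity)]
  refine ⟨hnorm, fun t _ => ?_⟩
  rw [intervalIntegral.integral_congr fun s _ => hintegrand s, intervalIntegral.integral_div,
    integral_sub_mul_cos_add_mul_sin hd.ne', hsqrt]
  field_simp
  ring

/-- For the first-order approximate Lie quadratic `V̂₁` (paper's Theorem 2) with
`B = β(cos γ·F1 + sin γ·F2)` and `ρ = −2c₂/(d²β)`, the quantity `‖V̂₁'''‖²` is the constant
`δ²d⁶β²`, and the approximate phase integral
`√ĉ·∫_{t0}^{t} (ĉ − ⟨Ĉ, V̂₁''⟩)/‖V̂₁'''‖²` equals the elementary function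
`δ·√(ρ²+1)·((t−t0)β + (a₁₁(cos(γ−d(t−t0)) − cos γ) + a₁₂(sin(γ−d(t−t0)) − sin γ))/d²)`. -/
theorem stmt_16 (F0 F1 F2 : E3)
    (hn0 : ‖F0‖ = 1) (hn1 : ‖F1‖ = 1) (hn2 : ‖F2‖ = 1)
    (h01 : cross F0 F1 = F2) (h12 : cross F1 F2 = F0) (h20 : cross F2 F0 = F1)
    (d β δ : ℝ) (hd : 0 < d) (hβ : 0 < β) (hδ : 0 < δ)
    (c₀ c₁ c₂ a11 a12 γ t0 : ℝ) (A₀ : E3) (hA₀ : ⟪A₀, F0⟫ = 0)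
    (B : E3) (hB : B = β • (Real.cos γ • F1 + Real.sin γ • F2))
    (ρ : ℝ) (hρ : ρ = -(2 * c₂) / (d ^ 2 * β))
    (Vhat : ℝ → E3)
    (hVhat : ∀ t : ℝ,
        Vhat t = d • F0 +
          δ • ((c₀ + c₁ * (t - t0) + c₂ * (t - t0) ^ 2) • F0 + A₀ +
              (t - t0) • (a11 • F1 + a12 • F2) +
              Real.cos (d * (t - t0)) • B - Real.sin (d * (t - t0)) • cross F0 B))
    (chat : ℝ) (hchat : chat = δ ^ 2 * (4 * c₂ ^ 2 + d ^ 4 * β ^ 2))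
    (Chat : E3) (hChat : Chat = δ • ((2 * c₂) • F0 - (d * a12) • F1 + (d * a11) • F2)) :
    (∀ s : ℝ, ‖iteratedDeriv 3 Vhat s‖ ^ 2 = δ ^ 2 * d ^ 6 * β ^ 2) ∧
      ∀ t : ℝ, t0 ≤ t →
        Real.sqrt chat *
            ∫ s in t0..t,
              (chat - ⟪Chat, iteratedDeriv 2 Vhat s⟫) / ‖iteratedDeriv 3 Vhat s‖ ^ 2 =
          δ * Real.sqrt (ρ ^ 2 + 1) *
            ((t - t0) * β +
              (a11 * (Real.cos (γ - d * (t - t0)) - Real.cos γ) +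
                  a12 * (Real.sin (γ - d * (t - t0)) - Real.sin γ)) / d ^ 2) :=
  stmt_16_general F0 F1 F2 hn0 hn1 hn2 h01 h20 d β δ hd hβ hδ c₀ c₁ c₂ a11 a12 γ t0 A₀ B hB ρ hρ
    Vhat hVhat chat hchat Chat hChat
end
end
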